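/- arXiv:1809.04011 — 12 statements merged into one kernel-verified Lean document; each statement's English description precedes it below -/
import Mathlib

section
/- Let β ∈ (-1,0), λ ≥ 0, t > 0 and p ∈ [1, 1/|β|). Then there exists a constant C = C(λ,β,p,t) > 0 such that for all ε ∈ (0, min(1,t)), ∫₀ᵗ |(s+ε)^β e^{-λ(s+ε)} - s^β e^{-λs}|^p ds ≤ C · ε^{1-|β|p}. In particular this integral tends to 0 as ε → 0⁺. -/
/-!
For `β ≤ 0` and `λ ≥ 0` the kernel `g` is positive and decreasing, so `0 ≤ g(s) - g(s+ε) ≤ s^β`,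
while the mean value theorem for `u^β` together with `1 - e^{-λε} ≤ λε` gives
`g(s) - g(s+ε) ≤ (|β| + λs) ε s^{β-1}`. Use the first bound on `(0, ε)` and the second on `(ε, t)`:
since `βp > -1` and `(β-1)p < -1`, both pieces are of order `ε^{βp+1} = ε^{1-|β|p}`.
-/

open MeasureTheory Real Filter Set intervalIntegral Topology

lemma rpow_sub_rpow_add_le {β s ε : ℝ} (hβ : β ≤ 0) (hs : 0 < s) (hε : 0 ≤ ε) :
    s ^ β - (s + ε) ^ β ≤ -β * s ^ (β - 1) * ε := by
  have hpos : ∀ u ∈ Icc s (s + ε), u ≠ 0 := fun u hu => (hs.trans_le hu.1).ne'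
  have hderiv : ∀ u ∈ interior (Icc s (s + ε)), deriv (fun u => -u ^ β) u ≤ -β * s ^ (β - 1) := by
    intro u hu
    rw [interior_Icc] at hu
    rw [deriv.fun_neg, Real.deriv_rpow_const, ← neg_mul]
    exact mul_le_mul_of_nonneg_left (rpow_le_rpow_of_nonpos hs hu.1.le (by linarith))
      (neg_nonneg.2 hβ)
  have := (convex_Icc s (s + ε)).image_sub_le_mul_sub_of_deriv_le
    (continuousOn_id.rpow_const fun u hu => Or.inl (hpos u hu)).neg
    (fun u hu => (differentiableAt_rpow_const_of_ne β
      (hpos u (interior_subset hu))).neg.differentiableWithinAt)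
    hderiv s (left_mem_Icc.2 (by linarith)) (s + ε) (right_mem_Icc.2 (by linarith))
    (by linarith)
  simp only [Pi.neg_apply, id, add_sub_cancel_left] at this
  linarith

lemma intervalIntegral_rpow_le_of_lt_neg_one {r a b : ℝ} (hr : r < -1) (ha : 0 < a) (hab : a ≤ b) :
    ∫ x in a..b, x ^ r ≤ a ^ (r + 1) / -(r + 1) := by
  rw [integral_rpow (Or.inr ⟨hr.ne, notMem_uIcc_of_lt ha (ha.trans_le hab)⟩), ← neg_div_neg_eq,
    neg_sub]
  gcongr
  · linarith
  · exact sub_le_self _ (rpow_pos_of_pos (ha.trans_le hab) _).le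

noncomputable def gammaKernel (β lam u : ℝ) : ℝ := u ^ β * exp (-(lam * u))

section GammaKernel

variable {β lam s ε : ℝ}

lemma gammaKernel_nonneg (hs : 0 ≤ s) : 0 ≤ gammaKernel β lam s :=
  mul_nonneg (rpow_nonneg hs β) (exp_pos _).le

lemma gammaKernel_le_rpow (hlam : 0 ≤ lam) (hs : 0 ≤ s) : gammaKernel β lam s ≤ s ^ β :=
  mul_le_of_le_one_right (rpow_nonneg hs β) (exp_le_one_iff.2 (neg_nonpos.2 (mul_nonneg hlam hs)))

lemma gammaKernel_add_le (hβ : β ≤ 0) (hlam : 0 ≤ lam) (hs : 0 < s) (hε : 0 ≤ ε) :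
    gammaKernel β lam (s + ε) ≤ gammaKernel β lam s :=
  mul_le_mul (rpow_le_rpow_of_nonpos hs (le_add_of_nonneg_right hε) hβ)
    (exp_le_exp.2 (by nlinarith)) (exp_pos _).le (rpow_nonneg hs.le β)

lemma abs_gammaKernel_add_sub (hβ : β ≤ 0) (hlam : 0 ≤ lam) (hs : 0 < s) (hε : 0 ≤ ε) :
    |gammaKernel β lam (s + ε) - gammaKernel β lam s| =
      gammaKernel β lam s - gammaKernel β lam (s + ε) := by
  rw [abs_sub_comm, abs_of_nonneg (sub_nonneg.2 (gammaKernel_add_le hβ hlam hs hε))]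

lemma abs_gammaKernel_add_sub_le_rpow (hβ : β ≤ 0) (hlam : 0 ≤ lam) (hs : 0 < s) (hε : 0 ≤ ε) :
    |gammaKernel β lam (s + ε) - gammaKernel β lam s| ≤ s ^ β := by
  rw [abs_gammaKernel_add_sub hβ hlam hs hε]
  linarith [gammaKernel_nonneg (β := β) (lam := lam) (by linarith : 0 ≤ s + ε),
    gammaKernel_le_rpow (β := β) hlam hs.le]

lemma abs_gammaKernel_add_sub_le_mul (hβ : β ≤ 0) (hlam : 0 ≤ lam) (hs : 0 < s) (hε : 0 ≤ ε) :
    |gammaKernel β lam (s + ε) - gammaKernel β lam s| ≤ (-β + lam * s) * ε * s ^ (β - 1) := by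
  rw [abs_gammaKernel_add_sub hβ hlam hs hε]
  set E := exp (-(lam * s))
  set F := exp (-(lam * ε))
  have hE : E ≤ 1 := exp_le_one_iff.2 (neg_nonpos.2 (mul_nonneg hlam hs.le))
  have hF : 1 - F ≤ lam * ε := by linarith [add_one_le_exp (-(lam * ε))]
  have hF1 : F ≤ 1 := exp_le_one_iff.2 (neg_nonpos.2 (mul_nonneg hlam hε))
  have hmono : (s + ε) ^ β ≤ s ^ β := rpow_le_rpow_of_nonpos hs (le_add_of_nonneg_right hε) hβ
  have hpow : s ^ β = s * s ^ (β - 1) := by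
    rw [rpow_sub_one hs.ne', mul_div_cancel₀ _ hs.ne']
  have hsplit : gammaKernel β lam s - gammaKernel β lam (s + ε) =
      E * (s ^ β - (s + ε) ^ β) + E * (s + ε) ^ β * (1 - F) := by
    simp only [gammaKernel, E, F, show -(lam * (s + ε)) = -(lam * s) + -(lam * ε) by ring, exp_add]
    ring
  have h1 : E * (s ^ β - (s + ε) ^ β) ≤ -β * s ^ (β - 1) * ε :=
    (mul_le_of_le_one_left (sub_nonneg.2 hmono) hE).trans (rpow_sub_rpow_add_le hβ hs hε)
  have h2 : E * (s + ε) ^ β * (1 - F) ≤ s ^ β * (lam * ε) :=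
    mul_le_mul ((mul_le_of_le_one_left (rpow_nonneg (by linarith) β) hE).trans hmono) hF
      (by linarith) (rpow_nonneg hs.le β)
  rw [hsplit]
  nlinarith

end GammaKernel

lemma intervalIntegral_le_of_le_rpow_of_le_mul_rpow {F : ℝ → ℝ} {r q A ε t : ℝ} (hr : -1 < r)
    (hq : q < -1) (hA : 0 ≤ A) (hε : 0 < ε) (hεt : ε ≤ t)
    (hF : AEStronglyMeasurable F (volume.restrict (Ioc 0 t)))
    (h_near : ∀ s ∈ Ioc 0 t, |F s| ≤ s ^ r) (h_far : ∀ s ∈ Ioo ε t, F s ≤ A * s ^ q) :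
    ∫ s in 0..t, F s ≤ ε ^ (r + 1) / (r + 1) + A * (ε ^ (q + 1) / -(q + 1)) := by
  have ht : 0 ≤ t := hε.le.trans hεt
  have hFint : IntervalIntegrable F volume 0 t := by
    refine (intervalIntegrable_rpow' hr).mono_fun (by rwa [uIoc_of_le ht]) ?_
    rw [uIoc_of_le ht]
    filter_upwards [ae_restrict_mem measurableSet_Ioc] with s hs
    rw [norm_eq_abs, norm_of_nonneg (rpow_nonneg hs.1.le r)]
    exact h_near s hs
  have hε_mem : ε ∈ uIcc 0 t := by rw [uIcc_of_le ht]; exact ⟨hε.le, hεt⟩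
  have h_near_int : ∫ s in 0..ε, F s ≤ ε ^ (r + 1) / (r + 1) := by
    calc ∫ s in 0..ε, F s ≤ ∫ s in 0..ε, s ^ r :=
          integral_mono_on_of_le_Ioo hε.le (hFint.mono_set (uIcc_subset_uIcc_left hε_mem))
            (intervalIntegrable_rpow' hr)
            fun s hs => (le_abs_self _).trans (h_near s ⟨hs.1, hs.2.le.trans hεt⟩)
      _ = ε ^ (r + 1) / (r + 1) := by
          rw [integral_rpow (Or.inl hr), zero_rpow (by linarith), sub_zero]
  have h_far_int : ∫ s in ε..t, F s ≤ A * (ε ^ (q + 1) / -(q + 1)) := by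
    calc ∫ s in ε..t, F s ≤ ∫ s in ε..t, A * s ^ q :=
          integral_mono_on_of_le_Ioo hεt (hFint.mono_set (uIcc_subset_uIcc_right hε_mem))
            ((intervalIntegrable_rpow
              (Or.inr (notMem_uIcc_of_lt hε (hε.trans_le hεt)))).const_mul A) h_far
      _ ≤ A * (ε ^ (q + 1) / -(q + 1)) := by
          rw [intervalIntegral.integral_const_mul]
          exact mul_le_mul_of_nonneg_left (intervalIntegral_rpow_le_of_lt_neg_one hq hε hεt) hA
  rw [← integral_add_adjacent_intervals (hFint.mono_set (uIcc_subset_uIcc_left hε_mem))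
    (hFint.mono_set (uIcc_subset_uIcc_right hε_mem))]
  exact add_le_add h_near_int h_far_int

theorem intervalIntegral_abs_gammaKernel_add_sub_rpow_le {β lam p t ε : ℝ} (hβ : β ≤ 0)
    (hlam : 0 ≤ lam) (hβp : -1 < β * p) (hp : β * p + 1 < p) (hε : 0 < ε) (hεt : ε ≤ t) :
    ∫ s in 0..t, |gammaKernel β lam (s + ε) - gammaKernel β lam s| ^ p ≤
      (1 / (β * p + 1) + (-β + lam * t) ^ p / (p - (β * p + 1))) * ε ^ (β * p + 1) := by
  have hp0 : 0 ≤ p := by linarith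
  have hK : 0 ≤ -β + lam * t := by nlinarith
  have h_near : ∀ s ∈ Ioc 0 t,
      |(|gammaKernel β lam (s + ε) - gammaKernel β lam s| ^ p)| ≤ s ^ (β * p) := by
    intro s hs
    rw [abs_of_nonneg (rpow_nonneg (abs_nonneg _) p), rpow_mul hs.1.le]
    exact rpow_le_rpow (abs_nonneg _) (abs_gammaKernel_add_sub_le_rpow hβ hlam hs.1 hε.le) hp0
  have h_far : ∀ s ∈ Ioo ε t, |gammaKernel β lam (s + ε) - gammaKernel β lam s| ^ p ≤
      ((-β + lam * t) * ε) ^ p * s ^ ((β - 1) * p) := by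
    intro s hs
    have hs0 : 0 < s := hε.trans hs.1
    have hle : |gammaKernel β lam (s + ε) - gammaKernel β lam s| ≤
        (-β + lam * t) * ε * s ^ (β - 1) :=
      (abs_gammaKernel_add_sub_le_mul hβ hlam hs0 hε.le).trans (by
        gcongr
        exact hs.2.le)
    rw [rpow_mul hs0.le, ← mul_rpow (mul_nonneg hK hε.le) (rpow_nonneg hs0.le _)]
    exact rpow_le_rpow (abs_nonneg _) hle hp0
  have hmeas : AEStronglyMeasurable
      (fun s => |gammaKernel β lam (s + ε) - gammaKernel β lam s| ^ p)
      (volume.restrict (Ioc 0 t)) := by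
    unfold gammaKernel
    fun_prop
  refine (intervalIntegral_le_of_le_rpow_of_le_mul_rpow hβp (by linarith)
    (rpow_nonneg (mul_nonneg hK hε.le) p) hε hεt hmeas h_near h_far).trans_eq ?_
  rw [mul_rpow hK hε.le, show (β - 1) * p + 1 = (β * p + 1) - p by ring,
    rpow_sub hε, show -(β * p + 1 - p) = p - (β * p + 1) by ring]
  field_simp

/-- For `β ∈ (-1,0)`, `λ ≥ 0`, `t > 0` and `p ∈ [1, 1/|β|)`, there is a constant
`C = C(λ,β,p,t) > 0` such that for all `ε ∈ (0, min(1,t))`,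
`∫₀ᵗ |(s+ε)^β e^{-λ(s+ε)} - s^β e^{-λs}|^p ds ≤ C ε^{1-|β|p}`; in particular the
integral tends to `0` as `ε → 0⁺`. -/
theorem stmt_1 (β lam p t : ℝ) (hβ : β ∈ Set.Ioo (-1 : ℝ) 0) (hlam : 0 ≤ lam)
    (ht : 0 < t) (hp : 1 ≤ p) (hp' : p < 1 / |β|) :
    (∃ C > 0, ∀ ε ∈ Set.Ioo 0 (min 1 t),
      (∫ s in (0:ℝ)..t,
        |(s + ε) ^ β * Real.exp (-(lam * (s + ε))) - s ^ β * Real.exp (-(lam * s))| ^ p)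
        ≤ C * ε ^ (1 - |β| * p)) ∧
    Tendsto (fun ε : ℝ => ∫ s in (0:ℝ)..t,
        |(s + ε) ^ β * Real.exp (-(lam * (s + ε))) - s ^ β * Real.exp (-(lam * s))| ^ p)
      (nhdsWithin 0 (Set.Ioi 0)) (nhds 0) := by
  have hβ0 : β < 0 := hβ.2
  have hexp : 1 - |β| * p = β * p + 1 := by rw [abs_of_neg hβ0]; ring
  have hβp : -1 < β * p := by
    have := (lt_div_iff₀ (abs_pos.2 hβ0.ne)).1 hp'
    linarith
  have hp1 : β * p + 1 < p := by nlinarith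
  set C := 1 / (β * p + 1) + (-β + lam * t) ^ p / (p - (β * p + 1))
  have hC : 0 < C := add_pos_of_pos_of_nonneg (div_pos one_pos (by linarith))
    (div_nonneg (rpow_nonneg (by nlinarith) p) (by linarith))
  have hbound : ∀ ε ∈ Ioo 0 (min 1 t), ∫ s in (0:ℝ)..t,
      |gammaKernel β lam (s + ε) - gammaKernel β lam s| ^ p ≤ C * ε ^ (1 - |β| * p) :=
    fun ε hε => hexp ▸ intervalIntegral_abs_gammaKernel_add_sub_rpow_le hβ0.le hlam hβp hp1 hε.1
      (hε.2.le.trans (min_le_right 1 t))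
  refine ⟨⟨C, hC, hbound⟩, ?_⟩
  have h_rate : Tendsto (fun ε : ℝ => C * ε ^ (1 - |β| * p)) (𝓝[>] 0) (𝓝 0) := by
    have hexp_nonneg : 0 ≤ 1 - |β| * p := by rw [hexp]; linarith
    have := ((continuous_rpow_const hexp_nonneg).tendsto 0).const_mul C
    rw [zero_rpow (by linarith), mul_zero] at this
    exact this.mono_left nhdsWithin_le_nhds
  refine squeeze_zero' (Eventually.of_forall fun ε =>
    integral_nonneg ht.le fun s _ => rpow_nonneg (abs_nonneg _) p) ?_ h_rate
  filter_upwards [Ioo_mem_nhdsGT (lt_min one_pos ht)] with ε hε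
  exact hbound ε hε
end

section
/- Let β > 0, λ ≥ 0, p ≥ 1, α ∈ (0,1) with 1 + (α-1)p > 0, and let t > 0. Then ∫₀ᵗ (t-s)^{(α-1)p} ( ∫₀^s |(t-v)^β e^{-λ(t-v)} - (s-v)^β e^{-λ(s-v)}|^p dv ) ds < ∞. -/
open MeasureTheory Real

/-- Condition `(D_p)(ii)` for the Gamma kernel with `β > 0`: for `λ ≥ 0`, `p ≥ 1`,
`α ∈ (0,1)` with `1 + (α-1)p > 0` and `t > 0`,
`∫₀ᵗ (t-s)^{(α-1)p} (∫₀ˢ |(t-v)^β e^{-λ(t-v)} - (s-v)^β e^{-λ(s-v)}|^p dv) ds < ∞`. -/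
theorem stmt_5 (β lam p α t : ℝ) (hβ : 0 < β) (hlam : 0 ≤ lam) (hp : 1 ≤ p)
    (hα : α ∈ Set.Ioo (0:ℝ) 1) (h1 : 0 < 1 + (α - 1) * p) (ht : 0 < t) :
    (∫⁻ s in Set.Ioo (0:ℝ) t, ENNReal.ofReal ((t - s) ^ ((α - 1) * p) *
        ∫ v in (0:ℝ)..s,
          |(t - v) ^ β * Real.exp (-(lam * (t - v))) -
            (s - v) ^ β * Real.exp (-(lam * (s - v)))| ^ p)) < ⊤ := by
  set r := (α - 1) * p with hr
  set C := (2 * t ^ β) ^ p with hCdef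
  have htβ : 0 ≤ t ^ β := Real.rpow_nonneg ht.le β
  have hC0 : 0 ≤ C := Real.rpow_nonneg (by positivity) p
  have hp0 : (0:ℝ) ≤ p := le_trans zero_le_one hp
  -- inner integral bound
  have hinner : ∀ s ∈ Set.Ioo (0:ℝ) t,
      (∫ v in (0:ℝ)..s,
          |(t - v) ^ β * Real.exp (-(lam * (t - v))) -
            (s - v) ^ β * Real.exp (-(lam * (s - v)))| ^ p) ≤ C * t := by
    intro s hs
    obtain ⟨hs0, hst⟩ := hs
    have hbound : ∀ v ∈ Set.uIoc (0:ℝ) s,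
        ‖|(t - v) ^ β * Real.exp (-(lam * (t - v))) -
            (s - v) ^ β * Real.exp (-(lam * (s - v)))| ^ p‖ ≤ C := by
      intro v hv
      rw [Set.uIoc_of_le hs0.le] at hv
      obtain ⟨hv0, hvs⟩ := hv
      have h1v : 0 ≤ t - v := by linarith
      have h2v : 0 ≤ s - v := by linarith
      have key : ∀ u : ℝ, 0 ≤ u → u ≤ t →
          u ^ β * Real.exp (-(lam * u)) ≤ t ^ β := by
        intro u hu hut
        have h1 : u ^ β ≤ t ^ β := Real.rpow_le_rpow hu hut hβ.le
        have h2 : Real.exp (-(lam * u)) ≤ 1 := by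
          rw [Real.exp_le_one_iff]
          nlinarith
        calc u ^ β * Real.exp (-(lam * u)) ≤ u ^ β * 1 :=
              mul_le_mul_of_nonneg_left h2 (Real.rpow_nonneg hu β)
          _ = u ^ β := mul_one _
          _ ≤ t ^ β := h1
      have hA := key (t - v) h1v (by linarith)
      have hB := key (s - v) h2v (by linarith)
      have hA0 : 0 ≤ (t - v) ^ β * Real.exp (-(lam * (t - v))) := by positivity
      have hB0 : 0 ≤ (s - v) ^ β * Real.exp (-(lam * (s - v))) := by positivity
      have habs : |(t - v) ^ β * Real.exp (-(lam * (t - v))) -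
            (s - v) ^ β * Real.exp (-(lam * (s - v)))| ≤ 2 * t ^ β := by
        rw [abs_sub_le_iff]
        constructor <;> nlinarith
      rw [Real.norm_eq_abs, abs_of_nonneg (Real.rpow_nonneg (abs_nonneg _) p)]
      exact Real.rpow_le_rpow (abs_nonneg _) habs hp0
    have hnorm := intervalIntegral.norm_integral_le_of_norm_le_const hbound
    calc (∫ v in (0:ℝ)..s, |(t - v) ^ β * Real.exp (-(lam * (t - v))) -
            (s - v) ^ β * Real.exp (-(lam * (s - v)))| ^ p)
        ≤ ‖∫ v in (0:ℝ)..s, |(t - v) ^ β * Real.exp (-(lam * (t - v))) -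
            (s - v) ^ β * Real.exp (-(lam * (s - v)))| ^ p‖ :=
          le_abs_self _
      _ ≤ C * |s - 0| := hnorm
      _ ≤ C * t := by
          rw [sub_zero, abs_of_nonneg hs0.le]
          exact mul_le_mul_of_nonneg_left hst.le hC0
  -- majorant is integrable
  have hrneg : -1 < r := by rw [hr]; linarith
  have hii : IntervalIntegrable (fun x : ℝ => x ^ r) volume 0 t :=
    intervalIntegral.intervalIntegrable_rpow' hrneg
  have hii2 : IntervalIntegrable (fun x : ℝ => (t - x) ^ r) volume 0 t := by
    have := hii.comp_sub_left t
    simpa using this.symm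
  have hint : IntegrableOn (fun s => (t - s) ^ r * (C * t)) (Set.Ioo 0 t) := by
    have h3 : IntegrableOn (fun x : ℝ => (t - x) ^ r) (Set.Ioc 0 t) :=
      (intervalIntegrable_iff_integrableOn_Ioc_of_le ht.le).mp hii2
    exact (h3.mono_set Set.Ioo_subset_Ioc_self).mul_const _
  calc (∫⁻ s in Set.Ioo (0:ℝ) t, ENNReal.ofReal ((t - s) ^ r *
        ∫ v in (0:ℝ)..s,
          |(t - v) ^ β * Real.exp (-(lam * (t - v))) -
            (s - v) ^ β * Real.exp (-(lam * (s - v)))| ^ p))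
      ≤ ∫⁻ s in Set.Ioo (0:ℝ) t, ENNReal.ofReal ((t - s) ^ r * (C * t)) := by
        apply setLIntegral_mono (by fun_prop) 
        intro s hs
        apply ENNReal.ofReal_le_ofReal
        exact mul_le_mul_of_nonneg_left (hinner s hs)
          (Real.rpow_nonneg (by linarith [hs.2]) r)
    _ < ⊤ := hint.lintegral_lt_top
end

section
/- Let β ∈ (-1,0), λ ≥ 0, p ≥ 1, α ∈ (0,1) with 1 + βp > 0 and 1 + (α-1)p > 0, and let t > 0. Then ∫₀ᵗ (t-s)^{(α-1)p} ( ∫₀^s |(t-v)^β e^{-λ(t-v)} - (s-v)^β e^{-λ(s-v)}|^p dv ) ds < ∞. -/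
open MeasureTheory Real

/-- Condition `(D_p)(ii)` for the Gamma kernel with `β ∈ (-1,0)`: for `λ ≥ 0`, `p ≥ 1`,
`α ∈ (0,1)` with `1 + βp > 0` and `1 + (α-1)p > 0`, and `t > 0`,
`∫₀ᵗ (t-s)^{(α-1)p} (∫₀ˢ |(t-v)^β e^{-λ(t-v)} - (s-v)^β e^{-λ(s-v)}|^p dv) ds < ∞`. -/
theorem stmt_6 (β lam p α t : ℝ) (hβ : β ∈ Set.Ioo (-1:ℝ) 0) (hlam : 0 ≤ lam)
    (hp : 1 ≤ p) (hα : α ∈ Set.Ioo (0:ℝ) 1)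
    (h1 : 0 < 1 + β * p) (h2 : 0 < 1 + (α - 1) * p) (ht : 0 < t) :
    (∫⁻ s in Set.Ioo (0:ℝ) t, ENNReal.ofReal ((t - s) ^ ((α - 1) * p) *
        ∫ v in (0:ℝ)..s,
          |(t - v) ^ β * Real.exp (-(lam * (t - v))) -
            (s - v) ^ β * Real.exp (-(lam * (s - v)))| ^ p)) < ⊤ := by
  obtain ⟨hβ1, hβ0⟩ := hβ
  have hp0 : (0:ℝ) < p := lt_of_lt_of_le one_pos hp
  have hbp : (-1:ℝ) < β * p := by linarith
  have hbp1 : (0:ℝ) < β * p + 1 := by linarith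
  set C : ℝ := t ^ (β * p + 1) / (β * p + 1) with hC
  have hC0 : 0 ≤ C := div_nonneg (Real.rpow_nonneg ht.le _) hbp1.le
  -- inner bound
  have inner_bound : ∀ s ∈ Set.Ioo (0:ℝ) t,
      (∫ v in (0:ℝ)..s, |(t - v) ^ β * Real.exp (-(lam * (t - v))) -
            (s - v) ^ β * Real.exp (-(lam * (s - v)))| ^ p) ≤ C := by
    intro s hs
    obtain ⟨hs0, hst⟩ := hs
    set f : ℝ → ℝ := fun v => |(t - v) ^ β * Real.exp (-(lam * (t - v))) -
            (s - v) ^ β * Real.exp (-(lam * (s - v)))| ^ p with hf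
    set g : ℝ → ℝ := fun v => (s - v) ^ (β * p) with hg
    have hgint : IntervalIntegrable g volume 0 s := by
      have := ((intervalIntegral.intervalIntegrable_rpow' (a := 0) (b := s) hbp).comp_sub_left s).symm
      simpa [hg] using this
    have hgInt : IntegrableOn g (Set.Ioc 0 s) := by
      rwa [intervalIntegrable_iff_integrableOn_Ioc_of_le hs0.le] at hgint
    -- pointwise bound on Ioo 0 s
    have hbound : ∀ v ∈ Set.Ioo (0:ℝ) s, f v ≤ g v := by
      intro v hv
      obtain ⟨hv0, hvs⟩ := hv
      have hsv : (0:ℝ) < s - v := by linarith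
      have htv : (0:ℝ) < t - v := by linarith
      set A : ℝ := (t - v) ^ β * Real.exp (-(lam * (t - v))) with hA
      set B : ℝ := (s - v) ^ β * Real.exp (-(lam * (s - v))) with hB
      have hA0 : 0 ≤ A := mul_nonneg (Real.rpow_nonneg htv.le _) (Real.exp_pos _).le
      have hB0 : 0 ≤ B := mul_nonneg (Real.rpow_nonneg hsv.le _) (Real.exp_pos _).le
      have hAle : A ≤ (s - v) ^ β := by
        have h1' : (t - v) ^ β * Real.exp (-(lam * (t - v))) ≤ (t - v) ^ β * 1 := by
          apply mul_le_mul_of_nonneg_left _ (Real.rpow_nonneg htv.le _)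
          exact Real.exp_le_one_iff.mpr (by nlinarith)
        have h2' : (t - v) ^ β ≤ (s - v) ^ β :=
          Real.rpow_le_rpow_of_nonpos hsv (by linarith) hβ0.le
        calc A ≤ (t - v) ^ β * 1 := h1'
          _ = (t - v) ^ β := mul_one _
          _ ≤ (s - v) ^ β := h2'
      have hBle : B ≤ (s - v) ^ β := by
        have h1' : (s - v) ^ β * Real.exp (-(lam * (s - v))) ≤ (s - v) ^ β * 1 := by
          apply mul_le_mul_of_nonneg_left _ (Real.rpow_nonneg hsv.le _)
          exact Real.exp_le_one_iff.mpr (by nlinarith)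
        simpa using h1'
      have habs : |A - B| ≤ (s - v) ^ β := by
        rw [abs_sub_le_iff]
        constructor <;> linarith
      have : |A - B| ^ p ≤ ((s - v) ^ β) ^ p :=
        Real.rpow_le_rpow (abs_nonneg _) habs hp0.le
      calc f v = |A - B| ^ p := rfl
        _ ≤ ((s - v) ^ β) ^ p := this
        _ = (s - v) ^ (β * p) := (Real.rpow_mul hsv.le β p).symm
        _ = g v := rfl
    have hfmeas : Measurable f := by unfold f; fun_prop
    have hres : volume.restrict (Set.Ioc (0:ℝ) s) = volume.restrict (Set.Ioo (0:ℝ) s) :=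
      Measure.restrict_congr_set Ioo_ae_eq_Ioc.symm
    have hae : ∀ᵐ v ∂(volume.restrict (Set.Ioc (0:ℝ) s)), f v ≤ g v := by
      rw [hres]
      filter_upwards [ae_restrict_mem measurableSet_Ioo] with v hv using hbound v hv
    have haen : ∀ᵐ v ∂(volume.restrict (Set.Ioc (0:ℝ) s)), ‖f v‖ ≤ g v := by
      filter_upwards [hae] with v hv
      rwa [Real.norm_eq_abs, abs_of_nonneg (Real.rpow_nonneg (abs_nonneg _) _)]
    have hfInt : IntegrableOn f (Set.Ioc 0 s) :=
      Integrable.mono' hgInt hfmeas.aestronglyMeasurable.restrict haen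
    have hle : ∫ v in Set.Ioc (0:ℝ) s, f v ≤ ∫ v in Set.Ioc (0:ℝ) s, g v :=
      integral_mono_ae hfInt hgInt hae
    have hgval : ∫ v in (0:ℝ)..s, g v = s ^ (β * p + 1) / (β * p + 1) := by
      have := intervalIntegral.integral_comp_sub_left (a := 0) (b := s)
        (f := fun u => u ^ (β * p)) s
      simp only [sub_zero, sub_self] at this
      rw [hg]
      rw [this, integral_rpow (Or.inl hbp)]
      rw [Real.zero_rpow (by positivity)]
      ring
    have hsle : s ^ (β * p + 1) / (β * p + 1) ≤ C := by
      rw [hC]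
      gcongr
    calc (∫ v in (0:ℝ)..s, f v) = ∫ v in Set.Ioc (0:ℝ) s, f v := by
          rw [intervalIntegral.integral_of_le hs0.le]
      _ ≤ ∫ v in Set.Ioc (0:ℝ) s, g v := hle
      _ = ∫ v in (0:ℝ)..s, g v := by rw [intervalIntegral.integral_of_le hs0.le]
      _ = s ^ (β * p + 1) / (β * p + 1) := hgval
      _ ≤ C := hsle
  -- outer integral
  have hmono : (∫⁻ s in Set.Ioo (0:ℝ) t, ENNReal.ofReal ((t - s) ^ ((α - 1) * p) *
        ∫ v in (0:ℝ)..s,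
          |(t - v) ^ β * Real.exp (-(lam * (t - v))) -
            (s - v) ^ β * Real.exp (-(lam * (s - v)))| ^ p)) ≤
      ∫⁻ s in Set.Ioo (0:ℝ) t,
        ENNReal.ofReal ((t - s) ^ ((α - 1) * p)) * ENNReal.ofReal C := by
    apply lintegral_mono_ae
    filter_upwards [ae_restrict_mem measurableSet_Ioo] with s hs
    rw [← ENNReal.ofReal_mul (Real.rpow_nonneg (by linarith [hs.2] : (0:ℝ) ≤ t - s) _)]
    exact ENNReal.ofReal_le_ofReal
      (mul_le_mul_of_nonneg_left (inner_bound s hs)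
        (Real.rpow_nonneg (by linarith [hs.2]) _))
  refine lt_of_le_of_lt hmono ?_
  rw [lintegral_mul_const' _ _ ENNReal.ofReal_ne_top]
  apply ENNReal.mul_lt_top _ ENNReal.ofReal_lt_top
  have hint : IntegrableOn (fun s => (t - s) ^ ((α - 1) * p)) (Set.Ioo 0 t) := by
    have h' : IntervalIntegrable (fun s => (t - s) ^ ((α - 1) * p)) volume 0 t := by
      have := ((intervalIntegral.intervalIntegrable_rpow' (a := 0) (b := t)
        (by linarith : (-1:ℝ) < (α - 1) * p)).comp_sub_left t).symm
      simpa using this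
    rw [intervalIntegrable_iff_integrableOn_Ioc_of_le ht.le] at h'
    exact h'.mono_set Set.Ioo_subset_Ioc_self
  exact hint.lintegral_lt_top
end

section
/- Let λ ≥ 0, p ≥ 1, α ∈ (0,1), β ∈ ℝ with 1 + βp > 0 and 2 + (α+β-2)p > 0, and let t > 0. Then ∫₀ᵗ ∫ₛᵗ (u-s)^{(α-2)p} ( ∫ₛᵘ (u-v)^{βp} e^{-λp(u-v)} dv ) du ds < ∞. -/
open MeasureTheory Real

/-- Condition `(D_p)(iii)` for the Gamma kernel: for `λ ≥ 0`, `p ≥ 1`, `α ∈ (0,1)`,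
`1 + βp > 0`, `2 + (α+β-2)p > 0` and `t > 0`,
`∫₀ᵗ ∫ₛᵗ (u-s)^{(α-2)p} (∫ₛᵘ (u-v)^{βp} e^{-λp(u-v)} dv) du ds < ∞`. -/
theorem stmt_7 (lam p α β t : ℝ) (hlam : 0 ≤ lam) (hp : 1 ≤ p)
    (hα : α ∈ Set.Ioo (0:ℝ) 1) (h1 : 0 < 1 + β * p) (h2 : 0 < 2 + (α + β - 2) * p)
    (ht : 0 < t) :
    (∫⁻ s in Set.Ioo (0:ℝ) t, ENNReal.ofReal
        (∫ u in s..t, (u - s) ^ ((α - 2) * p) *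
          ∫ v in s..u, (u - v) ^ (β * p) * Real.exp (-(lam * p * (u - v))))) < ⊤ := by
  have hp0 : 0 < p := lt_of_lt_of_le one_pos hp
  set c : ℝ := 1 + β * p with hc_def
  set γ : ℝ := 2 + (α + β - 2) * p with hγ_def
  have hβp : -1 < β * p := by linarith
  have hγ1 : -1 < γ - 1 - 1 + 1 := by linarith
  -- inner bound
  have hinner : ∀ s u : ℝ, s < u →
      (∫ v in s..u, (u - v) ^ (β * p) * Real.exp (-(lam * p * (u - v))))
        ≤ (u - s) ^ c / c := by
    intro s u hsu
    have h1v : IntervalIntegrable (fun v => (u - v) ^ (β * p)) volume s u := by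
      have := (intervalIntegral.intervalIntegrable_rpow' (a := u - s) (b := 0)
        hβp).comp_sub_left u
      simpa using this
    have hcts : ContinuousOn (fun v => Real.exp (-(lam * p * (u - v)))) (Set.uIcc s u) :=
      (by continuity : Continuous fun v => Real.exp (-(lam * p * (u - v)))).continuousOn
    have hfi : IntervalIntegrable
        (fun v => (u - v) ^ (β * p) * Real.exp (-(lam * p * (u - v)))) volume s u :=
      h1v.mul_continuousOn hcts
    have hmono : (∫ v in s..u, (u - v) ^ (β * p) * Real.exp (-(lam * p * (u - v))))
        ≤ ∫ v in s..u, (u - v) ^ (β * p) := by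
      apply intervalIntegral.integral_mono_on hsu.le hfi h1v
      intro v hv
      have hx : (0:ℝ) ≤ (u - v) ^ (β * p) := Real.rpow_nonneg (by linarith [hv.2]) _
      have hexp : Real.exp (-(lam * p * (u - v))) ≤ 1 := by
        apply Real.exp_le_one_iff.mpr
        have : 0 ≤ lam * p * (u - v) := by
          apply mul_nonneg (mul_nonneg hlam hp0.le); linarith [hv.2]
        linarith
      calc (u - v) ^ (β * p) * Real.exp (-(lam * p * (u - v)))
          ≤ (u - v) ^ (β * p) * 1 := by
            exact mul_le_mul_of_nonneg_left hexp hx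
        _ = (u - v) ^ (β * p) := mul_one _
    refine hmono.trans_eq ?_
    rw [intervalIntegral.integral_comp_sub_left (fun x => x ^ (β * p)) u]
    rw [integral_rpow (Or.inl hβp)]
    rw [sub_self, Real.zero_rpow (by linarith : β * p + 1 ≠ 0)]
    rw [show β * p + 1 = c by rw [hc_def]; ring]
    ring
  -- outer bound
  set C : ℝ := t ^ γ / γ / c with hC_def
  have houter : ∀ s ∈ Set.Ioo (0:ℝ) t,
      (∫ u in s..t, (u - s) ^ ((α - 2) * p) *
        ∫ v in s..u, (u - v) ^ (β * p) * Real.exp (-(lam * p * (u - v)))) ≤ C := by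
    intro s hs
    have hst : s < t := hs.2
    have hG : IntervalIntegrable (fun u => (u - s) ^ (γ - 1) / c) volume s t := by
      have := ((intervalIntegral.intervalIntegrable_rpow' (a := 0) (b := t - s)
        (by linarith : (-1:ℝ) < γ - 1)).comp_sub_right s)
      simpa using this.div_const c
    have hFG : (∫ u in s..t, (u - s) ^ ((α - 2) * p) *
        ∫ v in s..u, (u - v) ^ (β * p) * Real.exp (-(lam * p * (u - v))))
        ≤ ∫ u in s..t, (u - s) ^ (γ - 1) / c := by
      rw [intervalIntegral.integral_of_le hst.le, intervalIntegral.integral_of_le hst.le]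
      apply integral_mono_of_nonneg
      · filter_upwards [ae_restrict_mem measurableSet_Ioc] with u hu
        have h0 : (0:ℝ) ≤ (u - s) ^ ((α - 2) * p) :=
          Real.rpow_nonneg (by linarith [hu.1]) _
        have h0' : (0:ℝ) ≤ ∫ v in s..u, (u - v) ^ (β * p) *
            Real.exp (-(lam * p * (u - v))) := by
          apply intervalIntegral.integral_nonneg (by linarith [hu.1])
          intro v hv
          exact mul_nonneg (Real.rpow_nonneg (by linarith [hv.2]) _) (Real.exp_nonneg _)
        exact mul_nonneg h0 h0'
      · exact hG.1
      · filter_upwards [ae_restrict_mem measurableSet_Ioc] with u hu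
        have hsu : s < u := hu.1
        have h0 : (0:ℝ) ≤ (u - s) ^ ((α - 2) * p) :=
          Real.rpow_nonneg (by linarith) _
        calc (u - s) ^ ((α - 2) * p) *
            (∫ v in s..u, (u - v) ^ (β * p) * Real.exp (-(lam * p * (u - v))))
            ≤ (u - s) ^ ((α - 2) * p) * ((u - s) ^ c / c) :=
              mul_le_mul_of_nonneg_left (hinner s u hsu) h0
          _ = (u - s) ^ (γ - 1) / c := by
              rw [mul_div_assoc', ← Real.rpow_add (by linarith : (0:ℝ) < u - s)]
              congr 2
              rw [hc_def, hγ_def]; ring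
    refine hFG.trans ?_
    have hcomp : (∫ u in s..t, (u - s) ^ (γ - 1) / c)
        = ((t - s) ^ γ / γ) / c := by
      rw [intervalIntegral.integral_div]
      rw [intervalIntegral.integral_comp_sub_right (fun x => x ^ (γ - 1)) s]
      rw [sub_self, integral_rpow (Or.inl (by linarith : (-1:ℝ) < γ - 1))]
      rw [Real.zero_rpow (by linarith : γ - 1 + 1 ≠ 0), sub_add_cancel]
      ring_nf
    rw [hcomp, hC_def]
    have hts : (t - s) ^ γ ≤ t ^ γ :=
      Real.rpow_le_rpow (by linarith) (by linarith [hs.1]) h2.le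
    gcongr
  calc (∫⁻ s in Set.Ioo (0:ℝ) t, ENNReal.ofReal
        (∫ u in s..t, (u - s) ^ ((α - 2) * p) *
          ∫ v in s..u, (u - v) ^ (β * p) * Real.exp (-(lam * p * (u - v)))))
      ≤ ∫⁻ _ in Set.Ioo (0:ℝ) t, ENNReal.ofReal C := by
        apply setLIntegral_mono' measurableSet_Ioo
        intro s hs
        exact ENNReal.ofReal_le_ofReal (houter s hs)
    _ = ENNReal.ofReal C * volume (Set.Ioo (0:ℝ) t) := by
        rw [setLIntegral_const]
    _ < ⊤ := ENNReal.mul_lt_top ENNReal.ofReal_lt_top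
        (by simp [Real.volume_Ioo])
end

section
/- Let β ∈ (-1,0), λ ≥ 0, p ≥ 1, α ∈ (0,1) with 1 + βp > 0 and 2 + (α+β-2)p > 0, and let t > 0. Then ∫₀ᵗ ∫ₛᵗ (u-s)^{(α-2)p} ( ∫₀^s |(u-v)^β e^{-λ(u-v)} - (s-v)^β e^{-λ(s-v)}|^p dv ) du ds < ∞. -/
open MeasureTheory Real

lemma aux_add_rpow {A B p : ℝ} (hA : 0 ≤ A) (hB : 0 ≤ B) (hp : 0 ≤ p) :
    (A + B) ^ p ≤ 2 ^ p * (A ^ p + B ^ p) := by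
  have hmax : 0 ≤ max A B := le_max_of_le_left hA
  have h1 : A + B ≤ 2 * max A B := by
    rcases le_total A B with h | h
    · rw [max_eq_right h]; linarith
    · rw [max_eq_left h]; linarith
  calc (A + B) ^ p ≤ (2 * max A B) ^ p := Real.rpow_le_rpow (by linarith) h1 hp
    _ = 2 ^ p * (max A B) ^ p := Real.mul_rpow (by norm_num) hmax
    _ ≤ 2 ^ p * (A ^ p + B ^ p) := by
        have : (max A B) ^ p ≤ A ^ p + B ^ p := by
          rcases le_total A B with h | h
          · rw [max_eq_right h]
            exact le_add_of_nonneg_left (Real.rpow_nonneg hA p)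
          · rw [max_eq_left h]
            exact le_add_of_nonneg_right (Real.rpow_nonneg hB p)
        have h2 : (0:ℝ) ≤ 2 ^ p := Real.rpow_nonneg (by norm_num) p
        nlinarith [Real.rpow_nonneg hmax p]

/-- Key pointwise estimate. -/
lemma key_est (β lam p θ : ℝ) (hβ1 : -1 < β) (hβ0 : β < 0) (hlam : 0 ≤ lam)
    (hp : 1 ≤ p) (hθ0 : 0 < θ) (hθ1 : θ < 1) {b a : ℝ} (hb : 0 < b) (hba : b < a) :
    |a ^ β * Real.exp (-(lam * a)) - b ^ β * Real.exp (-(lam * b))| ^ p ≤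
      2 ^ p * ((a - b) ^ ((1 - θ) * p) * b ^ ((β - 1 + θ) * p)
        + lam ^ p * (a - b) ^ ((1 + β) * p)) := by
  have ha : 0 < a := hb.trans hba
  have hh : 0 < a - b := by linarith
  have haβ : a ^ β ≤ b ^ β := Real.rpow_le_rpow_of_nonpos hb hba.le hβ0.le
  have hbβ0 : 0 ≤ b ^ β := (Real.rpow_pos_of_pos hb β).le
  have haβ0 : 0 ≤ a ^ β := (Real.rpow_pos_of_pos ha β).le
  have hexpab : Real.exp (-(lam * a)) ≤ Real.exp (-(lam * b)) := by
    apply Real.exp_le_exp.mpr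
    have := mul_le_mul_of_nonneg_left hba.le hlam
    linarith
  have hexpb1 : Real.exp (-(lam * b)) ≤ 1 :=
    Real.exp_le_one_iff.mpr (by nlinarith)
  have hXY : a ^ β * Real.exp (-(lam * a)) ≤ b ^ β * Real.exp (-(lam * b)) :=
    mul_le_mul haβ hexpab (Real.exp_pos _).le hbβ0
  rw [abs_sub_comm, abs_of_nonneg (sub_nonneg.mpr hXY)]
  -- the first difference term
  set D : ℝ := b ^ β - a ^ β with hD
  have hD0 : 0 ≤ D := sub_nonneg.mpr haβ
  -- D ≤ (a-b) * b^(β-1)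
  have hD2 : D ≤ (a - b) * b ^ (β - 1) := by
    have hx1 : 1 ≤ a / b := (one_le_div hb).mpr hba.le
    have hxβ : (a / b) ^ (-1 : ℝ) ≤ (a / b) ^ β :=
      Real.rpow_le_rpow_of_exponent_le hx1 (by linarith)
    have haeq : a ^ β = b ^ β * (a / b) ^ β := by
      rw [← Real.mul_rpow hb.le (by positivity)]
      rw [mul_div_cancel₀ _ hb.ne']
    have hinv : (a / b) ^ (-1 : ℝ) = b / a := by
      rw [Real.rpow_neg_one]; field_simp
    have h2 : D ≤ b ^ β * (1 - b / a) := by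
      rw [hD, haeq]
      have : 1 - (a / b) ^ β ≤ 1 - b / a := by rw [← hinv]; linarith
      nlinarith
    have h3 : b ^ β * (1 - b / a) ≤ b ^ β * ((a - b) / b) := by
      apply mul_le_mul_of_nonneg_left _ hbβ0
      have e : 1 - b / a = (a - b) / a := by field_simp
      rw [e]
      exact div_le_div_of_nonneg_left hh.le hb hba.le
    calc D ≤ b ^ β * ((a - b) / b) := le_trans h2 h3
      _ = (a - b) * b ^ (β - 1) := by
          rw [Real.rpow_sub_one hb.ne']
          ring
  -- D ≤ b^β trivially
  have hD1 : D ≤ b ^ β := by nlinarith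
  -- interpolation
  set Aq : ℝ := (b ^ β) ^ θ * ((a - b) * b ^ (β - 1)) ^ (1 - θ) with hAq
  have hY0 : 0 ≤ (a - b) * b ^ (β - 1) := by positivity
  have hAq0 : 0 ≤ Aq := by positivity
  have hDA : D ≤ Aq := by
    rcases eq_or_lt_of_le hD0 with h0 | h0
    · rw [← h0]; exact hAq0
    · have : D = D ^ θ * D ^ (1 - θ) := by
        rw [← Real.rpow_add h0]; norm_num
      rw [this, hAq]
      exact mul_le_mul (Real.rpow_le_rpow h0.le hD1 hθ0.le)
        (Real.rpow_le_rpow h0.le hD2 (by linarith))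
        (Real.rpow_nonneg h0.le _) (Real.rpow_nonneg hbβ0 _)
  -- second term bound
  have hexp2 : Real.exp (-(lam * b)) - Real.exp (-(lam * a)) ≤ lam * (a - b) := by
    have hy : 0 ≤ lam * (a - b) := by positivity
    have h1 : 1 - lam * (a - b) ≤ Real.exp (-(lam * (a - b))) := by
      have := Real.add_one_le_exp (-(lam * (a - b)))
      linarith
    have h2 : Real.exp (-(lam * a)) = Real.exp (-(lam * b)) * Real.exp (-(lam * (a - b))) := by
      rw [← Real.exp_add]; ring_nf
    have h3 : Real.exp (-(lam * b)) * (1 - lam * (a - b)) ≤ Real.exp (-(lam * a)) := by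
      rw [h2]
      exact mul_le_mul_of_nonneg_left h1 (Real.exp_pos _).le
    nlinarith [(Real.exp_pos (-(lam * b))).le]
  set Bq : ℝ := lam * (a - b) * (a - b) ^ β with hBq
  have hBq0 : 0 ≤ Bq := by positivity
  have haβh : a ^ β ≤ (a - b) ^ β := Real.rpow_le_rpow_of_nonpos hh (by linarith) hβ0.le
  -- total bound before power
  have htot : b ^ β * Real.exp (-(lam * b)) - a ^ β * Real.exp (-(lam * a)) ≤ Aq + Bq := by
    have e1 : b ^ β * Real.exp (-(lam * b)) - a ^ β * Real.exp (-(lam * a))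
        = D * Real.exp (-(lam * b)) + a ^ β * (Real.exp (-(lam * b)) - Real.exp (-(lam * a))) := by
      rw [hD]; ring
    have e2 : D * Real.exp (-(lam * b)) ≤ Aq := by
      calc D * Real.exp (-(lam * b)) ≤ D * 1 := mul_le_mul_of_nonneg_left hexpb1 hD0
        _ = D := mul_one D
        _ ≤ Aq := hDA
    have e3 : a ^ β * (Real.exp (-(lam * b)) - Real.exp (-(lam * a))) ≤ Bq := by
      have hd0 : 0 ≤ Real.exp (-(lam * b)) - Real.exp (-(lam * a)) := sub_nonneg.mpr hexpab
      calc a ^ β * (Real.exp (-(lam * b)) - Real.exp (-(lam * a)))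
          ≤ a ^ β * (lam * (a - b)) := mul_le_mul_of_nonneg_left hexp2 haβ0
        _ ≤ (a - b) ^ β * (lam * (a - b)) := by
            apply mul_le_mul_of_nonneg_right haβh (by positivity)
        _ = Bq := by rw [hBq]; ring
    linarith
  -- raise to p
  have hp0 : (0:ℝ) ≤ p := by linarith
  have step1 : (b ^ β * Real.exp (-(lam * b)) - a ^ β * Real.exp (-(lam * a))) ^ p
      ≤ (Aq + Bq) ^ p := Real.rpow_le_rpow (sub_nonneg.mpr hXY) htot hp0
  have step2 : (Aq + Bq) ^ p ≤ 2 ^ p * (Aq ^ p + Bq ^ p) := aux_add_rpow hAq0 hBq0 hp0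
  have hAq' : Aq = (a - b) ^ (1 - θ) * b ^ (β - 1 + θ) := by
    rw [hAq, Real.mul_rpow hh.le (Real.rpow_pos_of_pos hb _).le,
      ← Real.rpow_mul hb.le, ← Real.rpow_mul hb.le, mul_comm, mul_assoc,
      ← Real.rpow_add hb, show (β - 1) * (1 - θ) + β * θ = β - 1 + θ by ring]
  have hAp : Aq ^ p = (a - b) ^ ((1 - θ) * p) * b ^ ((β - 1 + θ) * p) := by
    rw [hAq', Real.mul_rpow (Real.rpow_nonneg hh.le _) (Real.rpow_nonneg hb.le _),
      ← Real.rpow_mul hh.le, ← Real.rpow_mul hb.le]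
  have hBq' : Bq = lam * (a - b) ^ (1 + β) := by
    rw [hBq, Real.rpow_add hh, Real.rpow_one]; ring
  have hBp : Bq ^ p = lam ^ p * (a - b) ^ ((1 + β) * p) := by
    rw [hBq', Real.mul_rpow hlam (Real.rpow_nonneg hh.le _), ← Real.rpow_mul hh.le]
  calc (b ^ β * Real.exp (-(lam * b)) - a ^ β * Real.exp (-(lam * a))) ^ p
      ≤ (Aq + Bq) ^ p := step1
    _ ≤ 2 ^ p * (Aq ^ p + Bq ^ p) := step2
    _ = 2 ^ p * ((a - b) ^ ((1 - θ) * p) * b ^ ((β - 1 + θ) * p)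
        + lam ^ p * (a - b) ^ ((1 + β) * p)) := by rw [hAp, hBp]

lemma inner_est (β lam p θ q : ℝ) (hβ1 : -1 < β) (hβ0 : β < 0) (hlam : 0 ≤ lam)
    (hp : 1 ≤ p) (hθ0 : 0 < θ) (hθ1 : θ < 1) (hqdef : q = (β - 1 + θ) * p) (hq : -1 < q)
    {s u t : ℝ} (hs : 0 < s) (hsu : s < u) (hut : u ≤ t) :
    (∫ v in (0:ℝ)..s, |(u - v) ^ β * Real.exp (-(lam * (u - v))) -
        (s - v) ^ β * Real.exp (-(lam * (s - v)))| ^ p)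
      ≤ 2 ^ p * ((u - s) ^ ((1 - θ) * p) * (t ^ (q + 1) / (q + 1))
          + lam ^ p * (u - s) ^ ((1 + β) * p) * t) := by
  have hus : 0 < u - s := by linarith
  set c1 : ℝ := (u - s) ^ ((1 - θ) * p) with hc1
  set c2 : ℝ := lam ^ p * (u - s) ^ ((1 + β) * p) with hc2
  have hc10 : 0 ≤ c1 := Real.rpow_nonneg hus.le _
  have hc20 : 0 ≤ c2 := mul_nonneg (Real.rpow_nonneg hlam _) (Real.rpow_nonneg hus.le _)
  have hint1 : IntervalIntegrable (fun v => (s - v) ^ q) volume 0 s := by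
    have := (intervalIntegral.intervalIntegrable_rpow' (a := 0) (b := s) hq).comp_sub_left s
    simpa using this.symm
  have hintΦ : IntervalIntegrable
      (fun v => 2 ^ p * (c1 * (s - v) ^ q + c2)) volume 0 s :=
    ((hint1.const_mul c1).add intervalIntegrable_const).const_mul _
  have hne : ∀ᵐ (v : ℝ) ∂(volume.restrict (Set.Ioc 0 s)), v ≠ s := by
    refine ae_restrict_of_ae ?_
    rw [MeasureTheory.ae_iff]
    have : {v : ℝ | ¬v ≠ s} = {s} := by ext v; simp
    rw [this]
    exact Real.volume_singleton
  have key : (∫ v in (0:ℝ)..s, |(u - v) ^ β * Real.exp (-(lam * (u - v))) -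
        (s - v) ^ β * Real.exp (-(lam * (s - v)))| ^ p)
      ≤ ∫ v in (0:ℝ)..s, 2 ^ p * (c1 * (s - v) ^ q + c2) := by
    rw [intervalIntegral.integral_of_le hs.le, intervalIntegral.integral_of_le hs.le]
    refine integral_mono_of_nonneg ?_ ?_ ?_
    · exact Filter.Eventually.of_forall fun v => Real.rpow_nonneg (abs_nonneg _) p
    · exact (intervalIntegrable_iff_integrableOn_Ioc_of_le hs.le).mp hintΦ
    · filter_upwards [hne, ae_restrict_mem measurableSet_Ioc] with v hv1 hv2
      have hsv : 0 < s - v := by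
        rcases lt_or_eq_of_le hv2.2 with h | h
        · linarith
        · exact absurd h hv1
      have hba : s - v < u - v := by linarith
      have := key_est β lam p θ hβ1 hβ0 hlam hp hθ0 hθ1 hsv hba
      rw [show u - v - (s - v) = u - s by ring, ← hqdef] at this
      calc |(u - v) ^ β * Real.exp (-(lam * (u - v))) -
            (s - v) ^ β * Real.exp (-(lam * (s - v)))| ^ p
          ≤ 2 ^ p * (c1 * (s - v) ^ q + lam ^ p * (u - s) ^ ((1 + β) * p)) := by
            rw [hc1]; linarith [this]
        _ = 2 ^ p * (c1 * (s - v) ^ q + c2) := by rw [hc2]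
  refine key.trans ?_
  have hval : (∫ v in (0:ℝ)..s, 2 ^ p * (c1 * (s - v) ^ q + c2))
      = 2 ^ p * (c1 * (s ^ (q + 1) / (q + 1)) + c2 * s) := by
    rw [intervalIntegral.integral_const_mul]
    rw [intervalIntegral.integral_add (hint1.const_mul c1) intervalIntegrable_const]
    rw [intervalIntegral.integral_const_mul, intervalIntegral.integral_const]
    have : (∫ v in (0:ℝ)..s, (s - v) ^ q) = s ^ (q + 1) / (q + 1) := by
      have h := intervalIntegral.integral_comp_sub_left (a := 0) (b := s)
        (fun x => x ^ q) s
      simp only [sub_self, sub_zero] at h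
      rw [h, integral_rpow (Or.inl hq), Real.zero_rpow (by linarith), sub_zero]
    rw [this, smul_eq_mul]
    ring
  rw [hval]
  have hst : s ≤ t := le_of_lt (lt_of_lt_of_le hsu hut)
  have h1 : s ^ (q + 1) / (q + 1) ≤ t ^ (q + 1) / (q + 1) := by
    apply div_le_div_of_nonneg_right ?_ (by linarith)
    · exact Real.rpow_le_rpow hs.le hst (by linarith)
  have h2p : (0:ℝ) ≤ 2 ^ p := Real.rpow_nonneg (by norm_num) p
  have := mul_le_mul_of_nonneg_left
    (add_le_add (mul_le_mul_of_nonneg_left h1 hc10) (mul_le_mul_of_nonneg_left hst hc20)) h2p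
  calc 2 ^ p * (c1 * (s ^ (q + 1) / (q + 1)) + c2 * s)
      ≤ 2 ^ p * (c1 * (t ^ (q + 1) / (q + 1)) + c2 * t) := this
    _ = 2 ^ p * (c1 * (t ^ (q + 1) / (q + 1)) + c2 * t) := rfl

/-- Condition `(D_p)(iv)` for the Gamma kernel with `β ∈ (-1,0)`: for `λ ≥ 0`,
`p ≥ 1`, `α ∈ (0,1)` with `1 + βp > 0` and `2 + (α+β-2)p > 0`, and `t > 0`,
`∫₀ᵗ ∫ₛᵗ (u-s)^{(α-2)p} (∫₀ˢ |(u-v)^β e^{-λ(u-v)} - (s-v)^β e^{-λ(s-v)}|^p dv) du ds < ∞`. -/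
theorem stmt_8 (β lam p α t : ℝ) (hβ : β ∈ Set.Ioo (-1:ℝ) 0) (hlam : 0 ≤ lam)
    (hp : 1 ≤ p) (hα : α ∈ Set.Ioo (0:ℝ) 1)
    (h1 : 0 < 1 + β * p) (h2 : 0 < 2 + (α + β - 2) * p) (ht : 0 < t) :
    (∫⁻ s in Set.Ioo (0:ℝ) t, ENNReal.ofReal
        (∫ u in s..t, (u - s) ^ ((α - 2) * p) *
          ∫ v in (0:ℝ)..s,
            |(u - v) ^ β * Real.exp (-(lam * (u - v))) -
              (s - v) ^ β * Real.exp (-(lam * (s - v)))| ^ p)) < ⊤ := by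
  obtain ⟨hβ1, hβ0⟩ := hβ
  obtain ⟨hα0, hα1⟩ := hα
  have hp0 : (0:ℝ) < p := by linarith
  set θ : ℝ := (α - β) / 2 with hθdef
  have hθ0 : 0 < θ := by rw [hθdef]; linarith
  have hθ1 : θ < 1 := by rw [hθdef]; linarith
  set q : ℝ := (β - 1 + θ) * p with hqdef
  have hq : -1 < q := by rw [hqdef, hθdef]; nlinarith
  set r : ℝ := (α - 2) * p + (1 + β) * p with hrdef
  have hr : -1 < r := by rw [hrdef]; nlinarith
  have hqr : (α - 2) * p + (1 - θ) * p = q := by rw [hqdef, hθdef]; ring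
  set C1 : ℝ := t ^ (q + 1) / (q + 1) with hC1def
  have hC10 : 0 ≤ C1 := div_nonneg (Real.rpow_nonneg ht.le _) (by linarith)
  set c2 : ℝ := lam ^ p * t with hc2def
  have hc20 : 0 ≤ c2 := mul_nonneg (Real.rpow_nonneg hlam _) ht.le
  have h2p : (0:ℝ) ≤ 2 ^ p := Real.rpow_nonneg (by norm_num) p
  set M : ℝ := 2 ^ p * (C1 * (t ^ (q + 1) / (q + 1)) + c2 * (t ^ (r + 1) / (r + 1)))
    with hMdef
  have hFs : ∀ s ∈ Set.Ioo (0:ℝ) t,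
      (∫ u in s..t, (u - s) ^ ((α - 2) * p) *
        ∫ v in (0:ℝ)..s,
          |(u - v) ^ β * Real.exp (-(lam * (u - v))) -
            (s - v) ^ β * Real.exp (-(lam * (s - v)))| ^ p) ≤ M := by
    intro s hs
    obtain ⟨hs0, hst⟩ := hs
    have hint_q : IntervalIntegrable (fun u => (u - s) ^ q) volume s t := by
      have := (intervalIntegral.intervalIntegrable_rpow' (a := 0) (b := t - s) hq).comp_sub_right s
      simpa using this
    have hint_r : IntervalIntegrable (fun u => (u - s) ^ r) volume s t := by
      have := (intervalIntegral.intervalIntegrable_rpow' (a := 0) (b := t - s) hr).comp_sub_right s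
      simpa using this
    have hintg : IntervalIntegrable
        (fun u => 2 ^ p * (C1 * (u - s) ^ q + c2 * (u - s) ^ r)) volume s t :=
      ((hint_q.const_mul C1).add (hint_r.const_mul c2)).const_mul _
    have step : (∫ u in s..t, (u - s) ^ ((α - 2) * p) *
          ∫ v in (0:ℝ)..s,
            |(u - v) ^ β * Real.exp (-(lam * (u - v))) -
              (s - v) ^ β * Real.exp (-(lam * (s - v)))| ^ p)
        ≤ ∫ u in s..t, 2 ^ p * (C1 * (u - s) ^ q + c2 * (u - s) ^ r) := by
      rw [intervalIntegral.integral_of_le hst.le, intervalIntegral.integral_of_le hst.le]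
      refine integral_mono_of_nonneg ?_
        ((intervalIntegrable_iff_integrableOn_Ioc_of_le hst.le).mp hintg) ?_
      · filter_upwards [ae_restrict_mem measurableSet_Ioc] with u hu
        have h1 : (0:ℝ) ≤ (u - s) ^ ((α - 2) * p) :=
          Real.rpow_nonneg (by linarith [hu.1]) _
        exact mul_nonneg h1 (intervalIntegral.integral_nonneg hs0.le
          fun v _ => Real.rpow_nonneg (abs_nonneg _) p)
      · filter_upwards [ae_restrict_mem measurableSet_Ioc] with u hu
        have hsu : s < u := hu.1
        have hut : u ≤ t := hu.2
        have hus : 0 < u - s := by linarith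
        have hinner := inner_est β lam p θ q hβ1 hβ0 hlam hp hθ0 hθ1 hqdef hq hs0 hsu hut
        have hmul := mul_le_mul_of_nonneg_left hinner
          (Real.rpow_nonneg hus.le ((α - 2) * p))
        refine hmul.trans_eq ?_
        have e1 : (u - s) ^ ((α - 2) * p) * (u - s) ^ ((1 - θ) * p) = (u - s) ^ q := by
          rw [← Real.rpow_add hus, hqr]
        have e2 : (u - s) ^ ((α - 2) * p) * (u - s) ^ ((1 + β) * p) = (u - s) ^ r := by
          rw [← Real.rpow_add hus, hrdef]
        calc (u - s) ^ ((α - 2) * p) *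
              (2 ^ p * ((u - s) ^ ((1 - θ) * p) * (t ^ (q + 1) / (q + 1))
                + lam ^ p * (u - s) ^ ((1 + β) * p) * t))
            = 2 ^ p * (C1 * ((u - s) ^ ((α - 2) * p) * (u - s) ^ ((1 - θ) * p))
              + c2 * ((u - s) ^ ((α - 2) * p) * (u - s) ^ ((1 + β) * p))) := by
              rw [hC1def, hc2def]; ring
          _ = 2 ^ p * (C1 * (u - s) ^ q + c2 * (u - s) ^ r) := by rw [e1, e2]
    refine step.trans ?_
    have eq1 : (∫ u in s..t, (u - s) ^ q) = (t - s) ^ (q + 1) / (q + 1) := by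
      have h := intervalIntegral.integral_comp_sub_right (a := s) (b := t)
        (fun x => x ^ q) s
      simp only [sub_self] at h
      rw [h, integral_rpow (Or.inl hq), Real.zero_rpow (by linarith), sub_zero]
    have eq2 : (∫ u in s..t, (u - s) ^ r) = (t - s) ^ (r + 1) / (r + 1) := by
      have h := intervalIntegral.integral_comp_sub_right (a := s) (b := t)
        (fun x => x ^ r) s
      simp only [sub_self] at h
      rw [h, integral_rpow (Or.inl hr), Real.zero_rpow (by linarith), sub_zero]
    have hval : (∫ u in s..t, 2 ^ p * (C1 * (u - s) ^ q + c2 * (u - s) ^ r))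
        = 2 ^ p * (C1 * ((t - s) ^ (q + 1) / (q + 1)) + c2 * ((t - s) ^ (r + 1) / (r + 1))) := by
      rw [intervalIntegral.integral_const_mul,
        intervalIntegral.integral_add (hint_q.const_mul C1) (hint_r.const_mul c2),
        intervalIntegral.integral_const_mul, intervalIntegral.integral_const_mul, eq1, eq2]
    rw [hval, hMdef]
    have hts0 : (0:ℝ) ≤ t - s := by linarith
    have hb1 : (t - s) ^ (q + 1) / (q + 1) ≤ t ^ (q + 1) / (q + 1) :=
      div_le_div_of_nonneg_right
        (Real.rpow_le_rpow hts0 (by linarith) (by linarith)) (by linarith)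
    have hb2 : (t - s) ^ (r + 1) / (r + 1) ≤ t ^ (r + 1) / (r + 1) :=
      div_le_div_of_nonneg_right
        (Real.rpow_le_rpow hts0 (by linarith) (by linarith)) (by linarith)
    exact mul_le_mul_of_nonneg_left
      (add_le_add (mul_le_mul_of_nonneg_left hb1 hC10)
        (mul_le_mul_of_nonneg_left hb2 hc20)) h2p
  calc (∫⁻ s in Set.Ioo (0:ℝ) t, ENNReal.ofReal
        (∫ u in s..t, (u - s) ^ ((α - 2) * p) *
          ∫ v in (0:ℝ)..s,
            |(u - v) ^ β * Real.exp (-(lam * (u - v))) -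
              (s - v) ^ β * Real.exp (-(lam * (s - v)))| ^ p))
      ≤ ∫⁻ _ in Set.Ioo (0:ℝ) t, ENNReal.ofReal M :=
        setLIntegral_mono measurable_const fun s hs => ENNReal.ofReal_le_ofReal (hFs s hs)
    _ = ENNReal.ofReal M * volume (Set.Ioo (0:ℝ) t) := setLIntegral_const _ _
    _ < ⊤ := by
        rw [Real.volume_Ioo]
        exact ENNReal.mul_lt_top ENNReal.ofReal_lt_top ENNReal.ofReal_lt_top
end

section
/- Let β > 0, λ ≥ 0, p ≥ 1, α ∈ (0,1) with 1 + (α-1)p > 0 and 1 + (β-1)p > 0, and let t > 0. Then ∫₀ᵗ ∫ₛᵗ (u-s)^{(α-2)p} ( ∫₀^s |(u-v)^β e^{-λ(u-v)} - (s-v)^β e^{-λ(s-v)}|^p dv ) du ds < ∞. -/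
open MeasureTheory Real

private lemma ofReal_integral_le' {f : ℝ → ℝ} {μ : Measure ℝ} (hf : 0 ≤ᵐ[μ] f) :
    ENNReal.ofReal (∫ x, f x ∂μ) ≤ ∫⁻ x, ENNReal.ofReal (f x) ∂μ := by
  by_cases hfi : Integrable f μ
  · exact le_of_eq (ofReal_integral_eq_lintegral_ofReal hfi hf)
  · rw [integral_undef hfi]; simp

private lemma add_rpow_le' {x y p : ℝ} (hx : 0 ≤ x) (hy : 0 ≤ y) (hp : 0 ≤ p) :
    (x + y) ^ p ≤ 2 ^ p * (x ^ p + y ^ p) := by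
  have hmax : x + y ≤ 2 * max x y := by
    rcases le_total x y with h | h
    · rw [max_eq_right h]; linarith
    · rw [max_eq_left h]; linarith
  calc (x + y) ^ p ≤ (2 * max x y) ^ p := Real.rpow_le_rpow (by linarith) hmax hp
    _ = 2 ^ p * (max x y) ^ p := Real.mul_rpow (by norm_num) (hx.trans (le_max_left x y))
    _ ≤ 2 ^ p * (x ^ p + y ^ p) := by
        have h2 : (0:ℝ) ≤ 2 ^ p := Real.rpow_nonneg (by norm_num) p
        have : (max x y) ^ p ≤ x ^ p + y ^ p := by
          rcases le_total x y with h | h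
          · rw [max_eq_right h]; nlinarith [Real.rpow_nonneg hx p]
          · rw [max_eq_left h]; nlinarith [Real.rpow_nonneg hy p]
        nlinarith

private lemma rpow_mvt {β a h : ℝ} (hβ : 0 < β) (ha : 0 < a) (hh : 0 < h) :
    (a + h) ^ β - a ^ β ≤ β * ((a ^ (β - 1) + (a + h) ^ (β - 1)) * h) := by
  have hab : a < a + h := by linarith
  have hcont : ContinuousOn (fun x : ℝ => x ^ β) (Set.Icc a (a + h)) := fun x _ =>
    (Real.continuousAt_rpow_const x β (Or.inr hβ.le)).continuousWithinAt
  have hderiv : ∀ x ∈ Set.Ioo a (a + h),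
      HasDerivAt (fun x : ℝ => x ^ β) (β * x ^ (β - 1)) x := fun x hx =>
    Real.hasDerivAt_rpow_const (Or.inl (ne_of_gt (ha.trans hx.1)))
  obtain ⟨c, hc, hceq⟩ := exists_hasDerivAt_eq_slope (fun x : ℝ => x ^ β)
    (fun x => β * x ^ (β - 1)) hab hcont hderiv
  have hc0 : 0 < c := ha.trans hc.1
  have heq : (a + h) ^ β - a ^ β = β * c ^ (β - 1) * h := by
    have h' : a + h - a = h := by ring
    rw [h'] at hceq
    field_simp at hceq
    linarith [hceq]
  have hkey : c ^ (β - 1) ≤ a ^ (β - 1) + (a + h) ^ (β - 1) := by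
    rcases le_total 1 β with hb | hb
    · have h1 : c ^ (β - 1) ≤ (a + h) ^ (β - 1) :=
        Real.rpow_le_rpow hc0.le hc.2.le (by linarith)
      have h2 : (0:ℝ) ≤ a ^ (β - 1) := Real.rpow_nonneg ha.le _
      linarith
    · have h1 : c ^ (β - 1) ≤ a ^ (β - 1) :=
        Real.rpow_le_rpow_of_nonpos ha hc.1.le (by linarith)
      have h2 : (0:ℝ) ≤ (a + h) ^ (β - 1) := Real.rpow_nonneg (by linarith) _
      linarith
  nlinarith [hβ.le, hh.le, mul_le_mul_of_nonneg_left hkey hβ.le, hh]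

private lemma pointA {β lam p : ℝ} (hβ : 0 < β) (hlam : 0 ≤ lam) (hp : 1 ≤ p)
    {x y : ℝ} (hx : 0 < x) (hxy : x < y) :
    |y ^ β * Real.exp (-(lam * y)) - x ^ β * Real.exp (-(lam * x))| ^ p ≤
      (2 ^ p * (2 ^ p * β ^ p) * (x ^ ((β - 1) * p) + y ^ ((β - 1) * p))
        + 2 ^ p * lam ^ p * x ^ (β * p)) * (y - x) ^ p := by
  have hy : 0 < y := hx.trans hxy
  have hh : 0 < y - x := by linarith
  have hp0 : (0:ℝ) ≤ p := by linarith
  set S : ℝ := x ^ (β - 1) + y ^ (β - 1) with hS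
  have hSnn : 0 ≤ S := by positivity
  -- bound on the power increment
  have hmvt : y ^ β - x ^ β ≤ β * (S * (y - x)) := by
    have := rpow_mvt hβ hx hh
    rw [show x + (y - x) = y by ring] at this
    exact this
  have hpow_nn : 0 ≤ y ^ β - x ^ β :=
    sub_nonneg.mpr (Real.rpow_le_rpow hx.le hxy.le hβ.le)
  -- bound on exp decrement
  have hE0 : Real.exp (-(lam * x)) ≤ 1 := Real.exp_le_one_iff.mpr (by nlinarith)
  have hE1 : Real.exp (-(lam * y)) ≤ 1 := Real.exp_le_one_iff.mpr (by nlinarith)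
  have hEmono : Real.exp (-(lam * y)) ≤ Real.exp (-(lam * x)) :=
    Real.exp_le_exp.mpr (by nlinarith)
  have hexp : Real.exp (-(lam * x)) - Real.exp (-(lam * y)) ≤ lam * (y - x) := by
    have h1 : Real.exp (-(lam * y)) = Real.exp (-(lam * x)) * Real.exp (-(lam * (y - x))) := by
      rw [← Real.exp_add]; ring_nf
    have h2 : 1 - lam * (y - x) ≤ Real.exp (-(lam * (y - x))) := by
      linarith [Real.add_one_le_exp (-(lam * (y - x)))]
    have h3 : 0 < Real.exp (-(lam * x)) := Real.exp_pos _
    nlinarith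
  -- decomposition
  have hA : |(y ^ β - x ^ β) * Real.exp (-(lam * y))| ≤ β * (S * (y - x)) := by
    rw [abs_of_nonneg (by positivity)]
    have h4 : (y ^ β - x ^ β) * Real.exp (-(lam * y)) ≤ (y ^ β - x ^ β) * 1 :=
      mul_le_mul_of_nonneg_left hE1 hpow_nn
    nlinarith
  have hB : |x ^ β * (Real.exp (-(lam * y)) - Real.exp (-(lam * x)))| ≤ x ^ β * (lam * (y - x)) := by
    rw [abs_mul, abs_of_nonneg (Real.rpow_nonneg hx.le β), abs_of_nonpos (by linarith)]
    have : 0 ≤ x ^ β := Real.rpow_nonneg hx.le β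
    nlinarith
  have habs : |y ^ β * Real.exp (-(lam * y)) - x ^ β * Real.exp (-(lam * x))| ≤
      β * (S * (y - x)) + x ^ β * (lam * (y - x)) := by
    have hdecomp : y ^ β * Real.exp (-(lam * y)) - x ^ β * Real.exp (-(lam * x)) =
        (y ^ β - x ^ β) * Real.exp (-(lam * y))
          + x ^ β * (Real.exp (-(lam * y)) - Real.exp (-(lam * x))) := by ring
    rw [hdecomp]
    exact (abs_add_le _ _).trans (add_le_add hA hB)
  have hterm1nn : (0:ℝ) ≤ β * (S * (y - x)) := by positivity
  have hterm2nn : (0:ℝ) ≤ x ^ β * (lam * (y - x)) := by positivity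
  calc |y ^ β * Real.exp (-(lam * y)) - x ^ β * Real.exp (-(lam * x))| ^ p
      ≤ (β * (S * (y - x)) + x ^ β * (lam * (y - x))) ^ p :=
        Real.rpow_le_rpow (abs_nonneg _) habs hp0
    _ ≤ 2 ^ p * ((β * (S * (y - x))) ^ p + (x ^ β * (lam * (y - x))) ^ p) :=
        add_rpow_le' hterm1nn hterm2nn hp0
    _ = 2 ^ p * (β ^ p * (S ^ p * (y - x) ^ p) + (x ^ β) ^ p * (lam ^ p * (y - x) ^ p)) := by
        rw [Real.mul_rpow hβ.le (by positivity), Real.mul_rpow hSnn hh.le,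
          Real.mul_rpow (Real.rpow_nonneg hx.le β) (by positivity),
          Real.mul_rpow hlam hh.le]
    _ ≤ (2 ^ p * (2 ^ p * β ^ p) * (x ^ ((β - 1) * p) + y ^ ((β - 1) * p))
          + 2 ^ p * lam ^ p * x ^ (β * p)) * (y - x) ^ p := by
        have hSp : S ^ p ≤ 2 ^ p * (x ^ ((β - 1) * p) + y ^ ((β - 1) * p)) := by
          have := add_rpow_le' (Real.rpow_nonneg hx.le (β - 1))
            (Real.rpow_nonneg hy.le (β - 1)) hp0
          rw [← Real.rpow_mul hx.le, ← Real.rpow_mul hy.le] at this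
          exact this
        have hxb : (x ^ β) ^ p = x ^ (β * p) := (Real.rpow_mul hx.le β p).symm
        rw [hxb]
        have h2p : (0:ℝ) ≤ 2 ^ p := Real.rpow_nonneg (by norm_num) p
        have hbp : (0:ℝ) ≤ β ^ p := Real.rpow_nonneg hβ.le p
        have hhp : (0:ℝ) ≤ (y - x) ^ p := Real.rpow_nonneg hh.le p
        have hlp : (0:ℝ) ≤ lam ^ p := Real.rpow_nonneg hlam p
        have hxbp : (0:ℝ) ≤ x ^ (β * p) := Real.rpow_nonneg hx.le _
        nlinarith [mul_le_mul_of_nonneg_left hSp (by positivity : (0:ℝ) ≤ 2 ^ p * β ^ p * (y - x) ^ p)]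

private lemma lint1 {q s w t : ℝ} (hq : -1 < q) (hs : 0 < s) (hsw : s ≤ w) (hwt : w ≤ t) :
    ∫⁻ v in Set.Ioc 0 s, ENNReal.ofReal ((w - v) ^ q) ≤ ENNReal.ofReal (t ^ (q + 1) / (q + 1)) := by
  have hw : 0 < w := hs.trans_le hsw
  have hq1 : 0 < q + 1 := by linarith
  have hii : IntervalIntegrable (fun v : ℝ => (w - v) ^ q) volume 0 s := by
    have h0 := intervalIntegral.intervalIntegrable_rpow' (a := w - 0) (b := w - s) hq
    simpa using h0.comp_sub_left w
  have hInt : IntegrableOn (fun v : ℝ => (w - v) ^ q) (Set.Ioc 0 s) := by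
    have := intervalIntegrable_iff.mp hii
    rwa [Set.uIoc_of_le hs.le] at this
  have hnn : 0 ≤ᵐ[volume.restrict (Set.Ioc 0 s)] fun v : ℝ => (w - v) ^ q := by
    filter_upwards [ae_restrict_mem measurableSet_Ioc] with v hv
    exact Real.rpow_nonneg (by linarith [hv.2]) q
  rw [← ofReal_integral_eq_lintegral_ofReal hInt hnn]
  apply ENNReal.ofReal_le_ofReal
  have hsplit : ∫ v in Set.Ioc (0:ℝ) s, (w - v) ^ q = ∫ v in (0:ℝ)..s, (w - v) ^ q :=
    (intervalIntegral.integral_of_le hs.le).symm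
  rw [hsplit, intervalIntegral.integral_comp_sub_left (fun x : ℝ => x ^ q) w,
    integral_rpow (Or.inl hq)]
  have h2 : (0:ℝ) ≤ (w - s) ^ (q + 1) := Real.rpow_nonneg (by linarith) _
  have h3 : w ^ (q + 1) ≤ t ^ (q + 1) := Real.rpow_le_rpow hw.le hwt hq1.le
  rw [sub_zero]
  gcongr
  linarith

private lemma lint2 {r s t : ℝ} (hr : -1 < r) (hs : 0 ≤ s) (hst : s < t) :
    ∫⁻ u in Set.Ioc s t, ENNReal.ofReal ((u - s) ^ r) ≤ ENNReal.ofReal (t ^ (r + 1) / (r + 1)) := by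
  have hr1 : 0 < r + 1 := by linarith
  have hii : IntervalIntegrable (fun u : ℝ => (u - s) ^ r) volume s t := by
    have h0 := intervalIntegral.intervalIntegrable_rpow' (a := s - s) (b := t - s) hr
    simpa using h0.comp_sub_right s
  have hInt : IntegrableOn (fun u : ℝ => (u - s) ^ r) (Set.Ioc s t) := by
    have := intervalIntegrable_iff.mp hii
    rwa [Set.uIoc_of_le hst.le] at this
  have hnn : 0 ≤ᵐ[volume.restrict (Set.Ioc s t)] fun u : ℝ => (u - s) ^ r := by
    filter_upwards [ae_restrict_mem measurableSet_Ioc] with u hu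
    exact Real.rpow_nonneg (by linarith [hu.1]) r
  rw [← ofReal_integral_eq_lintegral_ofReal hInt hnn]
  apply ENNReal.ofReal_le_ofReal
  have hsplit : ∫ u in Set.Ioc s t, (u - s) ^ r = ∫ u in s..t, (u - s) ^ r :=
    (intervalIntegral.integral_of_le hst.le).symm
  rw [hsplit, intervalIntegral.integral_comp_sub_right (fun x : ℝ => x ^ r) s,
    integral_rpow (Or.inl hr), sub_self, Real.zero_rpow (by linarith), sub_zero]
  have h3 : (t - s) ^ (r + 1) ≤ t ^ (r + 1) :=
    Real.rpow_le_rpow (by linarith) (by linarith) hr1.le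
  gcongr

private lemma hG_lemma {β lam p t : ℝ} (hβ : 0 < β) (hlam : 0 ≤ lam) (hp : 1 ≤ p)
    (hq1 : -1 < (β - 1) * p) (hq2 : -1 < β * p)
    {s u : ℝ} (hs : 0 < s) (hsu : s < u) (hut : u ≤ t) :
    ENNReal.ofReal (∫ v in (0:ℝ)..s,
        |(u - v) ^ β * Real.exp (-(lam * (u - v))) -
          (s - v) ^ β * Real.exp (-(lam * (s - v)))| ^ p) ≤
      ENNReal.ofReal ((2 ^ p * (2 ^ p * β ^ p) *
          (t ^ ((β - 1) * p + 1) / ((β - 1) * p + 1) + t ^ ((β - 1) * p + 1) / ((β - 1) * p + 1))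
        + 2 ^ p * lam ^ p * (t ^ (β * p + 1) / (β * p + 1))) * (u - s) ^ p) := by
  have hst : s ≤ t := hsu.le.trans hut
  have hp0 : (0:ℝ) ≤ p := by linarith
  have hq1' : 0 < (β - 1) * p + 1 := by linarith
  have hq2' : 0 < β * p + 1 := by linarith
  have ht0 : 0 < t := hs.trans_le hst
  have hT1 : (0:ℝ) ≤ t ^ ((β - 1) * p + 1) / ((β - 1) * p + 1) := by positivity
  have hT2 : (0:ℝ) ≤ t ^ (β * p + 1) / (β * p + 1) := by positivity
  have hC1 : (0:ℝ) ≤ 2 ^ p * (2 ^ p * β ^ p) := by positivity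
  have hC2 : (0:ℝ) ≤ 2 ^ p * lam ^ p := by positivity
  rw [intervalIntegral.integral_of_le hs.le]
  refine (ofReal_integral_le'
    (Filter.Eventually.of_forall fun v => Real.rpow_nonneg (abs_nonneg _) p)).trans ?_
  have hne : ∀ᵐ v ∂(volume.restrict (Set.Ioc (0:ℝ) s)), v ≠ s := by
    refine ae_restrict_of_ae ?_
    rw [ae_iff]
    simp [Set.setOf_eq_eq_singleton, measure_singleton]
  calc ∫⁻ v in Set.Ioc (0:ℝ) s, ENNReal.ofReal
        (|(u - v) ^ β * Real.exp (-(lam * (u - v))) -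
          (s - v) ^ β * Real.exp (-(lam * (s - v)))| ^ p)
      ≤ ∫⁻ v in Set.Ioc (0:ℝ) s, ENNReal.ofReal
          ((2 ^ p * (2 ^ p * β ^ p) * ((s - v) ^ ((β - 1) * p) + (u - v) ^ ((β - 1) * p))
            + 2 ^ p * lam ^ p * (s - v) ^ (β * p)) * (u - s) ^ p) := by
        refine lintegral_mono_ae ?_
        filter_upwards [ae_restrict_mem measurableSet_Ioc, hne] with v hv hvne
        apply ENNReal.ofReal_le_ofReal
        have hx : (0:ℝ) < s - v := lt_of_le_of_ne (by linarith [hv.2]) (by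
          intro hcontra; exact hvne (by linarith))
        have h := pointA hβ hlam hp hx (show s - v < u - v by linarith)
        rw [show u - v - (s - v) = u - s by ring] at h
        exact h
    _ = ∫⁻ v in Set.Ioc (0:ℝ) s,
          ((ENNReal.ofReal (2 ^ p * (2 ^ p * β ^ p)) *
              (ENNReal.ofReal ((s - v) ^ ((β - 1) * p)) + ENNReal.ofReal ((u - v) ^ ((β - 1) * p)))
            + ENNReal.ofReal (2 ^ p * lam ^ p) * ENNReal.ofReal ((s - v) ^ (β * p)))
            * ENNReal.ofReal ((u - s) ^ p)) := by
        refine lintegral_congr_ae ?_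
        filter_upwards [ae_restrict_mem measurableSet_Ioc] with v hv
        have hsv : (0:ℝ) ≤ s - v := by linarith [hv.2]
        have huv : (0:ℝ) ≤ u - v := by linarith [hv.2]
        have e1 : (0:ℝ) ≤ (s - v) ^ ((β - 1) * p) := Real.rpow_nonneg hsv _
        have e2 : (0:ℝ) ≤ (u - v) ^ ((β - 1) * p) := Real.rpow_nonneg huv _
        have e3 : (0:ℝ) ≤ (s - v) ^ (β * p) := Real.rpow_nonneg hsv _
        rw [ENNReal.ofReal_mul (by nlinarith), ENNReal.ofReal_add (by nlinarith) (by nlinarith),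
          ENNReal.ofReal_mul hC1, ENNReal.ofReal_mul hC2,
          ENNReal.ofReal_add e1 e2]
    _ = (ENNReal.ofReal (2 ^ p * (2 ^ p * β ^ p)) *
            ((∫⁻ v in Set.Ioc (0:ℝ) s, ENNReal.ofReal ((s - v) ^ ((β - 1) * p)))
              + ∫⁻ v in Set.Ioc (0:ℝ) s, ENNReal.ofReal ((u - v) ^ ((β - 1) * p)))
          + ENNReal.ofReal (2 ^ p * lam ^ p) *
              ∫⁻ v in Set.Ioc (0:ℝ) s, ENNReal.ofReal ((s - v) ^ (β * p)))
          * ENNReal.ofReal ((u - s) ^ p) := by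
        rw [lintegral_mul_const' _ _ ENNReal.ofReal_ne_top,
          lintegral_add_left (by fun_prop),
          lintegral_const_mul' _ _ ENNReal.ofReal_ne_top,
          lintegral_const_mul' _ _ ENNReal.ofReal_ne_top,
          lintegral_add_left (by fun_prop)]
    _ ≤ (ENNReal.ofReal (2 ^ p * (2 ^ p * β ^ p)) *
            (ENNReal.ofReal (t ^ ((β - 1) * p + 1) / ((β - 1) * p + 1))
              + ENNReal.ofReal (t ^ ((β - 1) * p + 1) / ((β - 1) * p + 1)))
          + ENNReal.ofReal (2 ^ p * lam ^ p) *
              ENNReal.ofReal (t ^ (β * p + 1) / (β * p + 1)))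
          * ENNReal.ofReal ((u - s) ^ p) := by
        gcongr
        · exact lint1 hq1 hs le_rfl hst
        · exact lint1 hq1 hs hsu.le hut
        · exact lint1 hq2 hs le_rfl hst
    _ = ENNReal.ofReal ((2 ^ p * (2 ^ p * β ^ p) *
          (t ^ ((β - 1) * p + 1) / ((β - 1) * p + 1) + t ^ ((β - 1) * p + 1) / ((β - 1) * p + 1))
        + 2 ^ p * lam ^ p * (t ^ (β * p + 1) / (β * p + 1))) * (u - s) ^ p) := by
        rw [← ENNReal.ofReal_add hT1 hT1, ← ENNReal.ofReal_mul hC1, ← ENNReal.ofReal_mul hC2,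
          ← ENNReal.ofReal_add (by positivity) (by positivity),
          ← ENNReal.ofReal_mul (by positivity)]

/-- Condition `(D_p)(iv)` for the Gamma kernel with `β > 0`: for `λ ≥ 0`, `p ≥ 1`,
`α ∈ (0,1)` with `1 + (α-1)p > 0` and `1 + (β-1)p > 0`, and `t > 0`,
`∫₀ᵗ ∫ₛᵗ (u-s)^{(α-2)p} (∫₀ˢ |(u-v)^β e^{-λ(u-v)} - (s-v)^β e^{-λ(s-v)}|^p dv) du ds < ∞`. -/
theorem stmt_9 (β lam p α t : ℝ) (hβ : 0 < β) (hlam : 0 ≤ lam)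
    (hp : 1 ≤ p) (hα : α ∈ Set.Ioo (0:ℝ) 1)
    (h1 : 0 < 1 + (α - 1) * p) (h2 : 0 < 1 + (β - 1) * p) (ht : 0 < t) :
    (∫⁻ s in Set.Ioo (0:ℝ) t, ENNReal.ofReal
        (∫ u in s..t, (u - s) ^ ((α - 2) * p) *
          ∫ v in (0:ℝ)..s,
            |(u - v) ^ β * Real.exp (-(lam * (u - v))) -
              (s - v) ^ β * Real.exp (-(lam * (s - v)))| ^ p)) < ⊤ := by
  obtain ⟨hα0, hα1⟩ := hα
  have hp0 : (0:ℝ) < p := lt_of_lt_of_le one_pos hp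
  have hq1 : -1 < (β - 1) * p := by linarith
  have hq2 : -1 < β * p := by nlinarith
  have hrr : -1 < (α - 1) * p := by linarith
  set Ctot : ℝ := 2 ^ p * (2 ^ p * β ^ p) *
          (t ^ ((β - 1) * p + 1) / ((β - 1) * p + 1) + t ^ ((β - 1) * p + 1) / ((β - 1) * p + 1))
        + 2 ^ p * lam ^ p * (t ^ (β * p + 1) / (β * p + 1)) with hCtot_def
  have hq1' : 0 < (β - 1) * p + 1 := by linarith
  have hq2' : 0 < β * p + 1 := by linarith
  have hCtot : (0:ℝ) ≤ Ctot := by positivity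
  calc (∫⁻ s in Set.Ioo (0:ℝ) t, ENNReal.ofReal
        (∫ u in s..t, (u - s) ^ ((α - 2) * p) *
          ∫ v in (0:ℝ)..s,
            |(u - v) ^ β * Real.exp (-(lam * (u - v))) -
              (s - v) ^ β * Real.exp (-(lam * (s - v)))| ^ p))
      ≤ ∫⁻ _ in Set.Ioo (0:ℝ) t,
          ENNReal.ofReal Ctot * ENNReal.ofReal (t ^ ((α - 1) * p + 1) / ((α - 1) * p + 1)) := by
        refine lintegral_mono_ae ?_
        filter_upwards [ae_restrict_mem measurableSet_Ioo] with s hs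
        rw [intervalIntegral.integral_of_le hs.2.le]
        refine (ofReal_integral_le' ?_).trans ?_
        · filter_upwards [ae_restrict_mem measurableSet_Ioc] with u hu
          have hh1 : (0:ℝ) ≤ (u - s) ^ ((α - 2) * p) :=
            Real.rpow_nonneg (by linarith [hu.1]) _
          have hh2 : (0:ℝ) ≤ ∫ v in (0:ℝ)..s,
              |(u - v) ^ β * Real.exp (-(lam * (u - v))) -
                (s - v) ^ β * Real.exp (-(lam * (s - v)))| ^ p :=
            intervalIntegral.integral_nonneg hs.1.le
              (fun v _ => Real.rpow_nonneg (abs_nonneg _) _)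
          exact mul_nonneg hh1 hh2
        · calc ∫⁻ u in Set.Ioc s t, ENNReal.ofReal
                ((u - s) ^ ((α - 2) * p) *
                  ∫ v in (0:ℝ)..s,
                    |(u - v) ^ β * Real.exp (-(lam * (u - v))) -
                      (s - v) ^ β * Real.exp (-(lam * (s - v)))| ^ p)
              ≤ ∫⁻ u in Set.Ioc s t, ENNReal.ofReal (Ctot * (u - s) ^ ((α - 1) * p)) := by
                refine lintegral_mono_ae ?_
                filter_upwards [ae_restrict_mem measurableSet_Ioc] with u hu
                have hus : (0:ℝ) < u - s := by linarith [hu.1]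
                rw [ENNReal.ofReal_mul (Real.rpow_nonneg hus.le _),
                  ENNReal.ofReal_mul hCtot]
                refine (mul_le_mul_right
                  (hG_lemma hβ hlam hp hq1 hq2 hs.1 hu.1 hu.2) _).trans ?_
                rw [← hCtot_def, ← ENNReal.ofReal_mul (Real.rpow_nonneg hus.le _)]
                refine le_of_eq ?_
                rw [show (u - s) ^ ((α - 2) * p) * (Ctot * (u - s) ^ p)
                    = Ctot * ((u - s) ^ ((α - 2) * p) * (u - s) ^ p) by ring,
                  ← Real.rpow_add hus, show (α - 2) * p + p = (α - 1) * p by ring,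
                  ENNReal.ofReal_mul hCtot]
            _ ≤ ENNReal.ofReal Ctot * ENNReal.ofReal (t ^ ((α - 1) * p + 1) / ((α - 1) * p + 1)) := by
                simp_rw [fun u : ℝ => ENNReal.ofReal_mul (q := (u - s) ^ ((α - 1) * p)) hCtot]
                rw [lintegral_const_mul' _ _ ENNReal.ofReal_ne_top]
                exact mul_le_mul_right (lint2 hrr hs.1.le hs.2) _
    _ = ENNReal.ofReal Ctot * ENNReal.ofReal (t ^ ((α - 1) * p + 1) / ((α - 1) * p + 1))
          * volume (Set.Ioo (0:ℝ) t) := setLIntegral_const _ _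
    _ < ⊤ := by
        rw [Real.volume_Ioo]
        exact ENNReal.mul_lt_top
          (ENNReal.mul_lt_top ENNReal.ofReal_lt_top ENNReal.ofReal_lt_top)
          ENNReal.ofReal_lt_top
end

section
/- Let β ∈ (-1,0), p ≥ 1, α ∈ (0,1) with 1 + βp > 0 and 3 + (α+β-3)p > 0, and let T > 0. Then ∫₀ᵀ (T-s)^{(α-1)p} ( ∫ₛᵀ |(T-v+ε)^β - (T-v)^β|^p dv ) ds → 0 as ε → 0⁺. -/
open MeasureTheory Real Filter

private lemma bern_neg {t b : ℝ} (ht : 0 ≤ t) (hb0 : -1 ≤ b) (hb1 : b ≤ 0) :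
    1 + b * t ≤ (1 + t) ^ b := by
  have h1t : (0:ℝ) < 1 + t := by linarith
  have hu : (1 + t) ^ (-b) ≤ 1 + (-b) * t :=
    rpow_one_add_le_one_add_mul_self (by linarith) (by linarith) (by linarith)
  have hupos : 0 < (1 + t) ^ (-b) := Real.rpow_pos_of_pos h1t _
  rcases le_or_gt (1 + b * t) 0 with h | h
  · exact h.trans (Real.rpow_pos_of_pos h1t b).le
  · have hbeq : (1 + t) ^ b = 1 / ((1 + t) ^ (-b)) :=
      eq_one_div_of_mul_eq_one_left (by rw [← Real.rpow_add h1t]; simp)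
    rw [hbeq, le_div_iff₀ hupos]
    calc (1 + b * t) * (1 + t) ^ (-b) ≤ (1 + b * t) * (1 + (-b) * t) :=
          mul_le_mul_of_nonneg_left hu h.le
      _ = 1 - (b * t) ^ 2 := by ring
      _ ≤ 1 := by nlinarith [sq_nonneg (b * t)]

private lemma key_bound {b θ x ε : ℝ} (hb0 : -1 < b) (hb1 : b < 0)
    (hθ0 : 0 < θ) (hθ1 : θ ≤ 1) (hx : 0 < x) (hε : 0 < ε) :
    |(x + ε) ^ b - x ^ b| ≤ (-b) ^ θ * ε ^ θ * x ^ (b - θ) := by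
  have hnb : (0:ℝ) < -b := by linarith
  have hxε : 0 < x + ε := by linarith
  have hle : (x + ε) ^ b ≤ x ^ b :=
    Real.rpow_le_rpow_of_nonpos hx (by linarith) hb1.le
  rw [abs_sub_comm, abs_of_nonneg (sub_nonneg.mpr hle)]
  set d : ℝ := x ^ b - (x + ε) ^ b with hd
  have hd0 : 0 ≤ d := sub_nonneg.mpr hle
  have hbd1 : d ≤ x ^ b := by
    have := (Real.rpow_pos_of_pos hxε b).le
    rw [hd]; linarith
  have hbd2 : d ≤ (-b) * ε * x ^ (b - 1) := by
    have ht : (0:ℝ) ≤ ε / x := (div_pos hε hx).le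
    have hbern : 1 + b * (ε / x) ≤ (1 + ε / x) ^ b := bern_neg ht hb0.le hb1.le
    have hsplit : x + ε = x * (1 + ε / x) := by field_simp
    have hmul : x ^ b * (1 + b * (ε / x)) ≤ (x + ε) ^ b := by
      rw [hsplit, Real.mul_rpow hx.le (by positivity)]
      exact mul_le_mul_of_nonneg_left hbern (Real.rpow_pos_of_pos hx b).le
    have hxb1 : x ^ b * (ε / x) = ε * x ^ (b - 1) := by
      rw [Real.rpow_sub hx, Real.rpow_one]; field_simp
    have h2 : x ^ b + b * (ε * x ^ (b - 1)) ≤ (x + ε) ^ b := by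
      calc x ^ b + b * (ε * x ^ (b - 1)) = x ^ b * (1 + b * (ε / x)) := by
            rw [← hxb1]; ring
        _ ≤ (x + ε) ^ b := hmul
    have h3 : d ≤ -(b * (ε * x ^ (b - 1))) := by rw [hd]; linarith
    calc d ≤ -(b * (ε * x ^ (b - 1))) := h3
      _ = (-b) * ε * x ^ (b - 1) := by ring
  rcases eq_or_lt_of_le hd0 with h0 | hdpos
  · rw [← h0]
    have : (0:ℝ) ≤ x ^ (b - θ) := Real.rpow_nonneg hx.le _
    positivity
  · have h1 : d = d ^ (1 - θ) * d ^ θ := by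
      rw [← Real.rpow_add hdpos]
      norm_num
    calc d = d ^ (1 - θ) * d ^ θ := h1
      _ ≤ (x ^ b) ^ (1 - θ) * ((-b) * ε * x ^ (b - 1)) ^ θ := by
          apply mul_le_mul (Real.rpow_le_rpow hd0 hbd1 (by linarith))
            (Real.rpow_le_rpow hd0 hbd2 hθ0.le) (Real.rpow_nonneg hd0 _)
            (Real.rpow_nonneg (Real.rpow_nonneg hx.le _) _)
      _ = (x ^ (b * (1 - θ)) * x ^ ((b - 1) * θ)) * ((-b) ^ θ * ε ^ θ) := by
          rw [Real.mul_rpow (mul_nonneg hnb.le hε.le) (Real.rpow_nonneg hx.le _),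
            Real.mul_rpow hnb.le hε.le, ← Real.rpow_mul hx.le, ← Real.rpow_mul hx.le]
          ring
      _ = (-b) ^ θ * ε ^ θ * x ^ (b - θ) := by
          rw [← Real.rpow_add hx]
          rw [show b * (1 - θ) + (b - 1) * θ = b - θ by ring]
          ring

/-- Condition `(C_p)(i)` for the kernel `g(u) = u^β`, `β ∈ (-1,0)`: if `p ≥ 1`,
`α ∈ (0,1)`, `1 + βp > 0`, `3 + (α+β-3)p > 0` and `T > 0`, then
`∫₀ᵀ (T-s)^{(α-1)p} (∫ₛᵀ |(T-v+ε)^β - (T-v)^β|^p dv) ds → 0` as `ε → 0⁺`. -/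
theorem stmt_11 (β p α T : ℝ) (hβ : β ∈ Set.Ioo (-1:ℝ) 0) (hp : 1 ≤ p)
    (hα : α ∈ Set.Ioo (0:ℝ) 1) (h1 : 0 < 1 + β * p) (h2 : 0 < 3 + (α + β - 3) * p)
    (hT : 0 < T) :
    Tendsto (fun ε : ℝ => ∫ s in (0:ℝ)..T, (T - s) ^ ((α - 1) * p) *
        ∫ v in s..T, |(T - v + ε) ^ β - (T - v) ^ β| ^ p)
      (nhdsWithin 0 (Set.Ioi 0)) (nhds 0) := by
  obtain ⟨hβ0, hβ1⟩ := hβ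
  obtain ⟨hα0, hα1⟩ := hα
  have hp0 : (0:ℝ) < p := lt_of_lt_of_le one_pos hp
  have hnb : (0:ℝ) < -β := by linarith
  have hB : 0 < 2 + (α + β - 2) * p := by nlinarith
  obtain ⟨m, hmdef⟩ : ∃ x : ℝ, x = min (1 + β * p) (2 + (α + β - 2) * p) := ⟨_, rfl⟩
  have hm0 : 0 < m := by rw [hmdef]; exact lt_min h1 hB
  obtain ⟨θ, hθdef⟩ : ∃ x : ℝ, x = m / (2 * p) := ⟨_, rfl⟩
  have hθ0 : 0 < θ := by rw [hθdef]; positivity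
  have hθp : θ * p = m / 2 := by
    rw [hθdef]; field_simp
  have hml : m ≤ 1 + β * p := by rw [hmdef]; exact min_le_left _ _
  have hmr : m ≤ 2 + (α + β - 2) * p := by rw [hmdef]; exact min_le_right _ _
  have hθ1 : θ ≤ 1 := by
    rw [hθdef, div_le_one (by positivity)]
    nlinarith [mul_neg_of_neg_of_pos hβ1 hp0]
  obtain ⟨q, hqdef⟩ : ∃ x : ℝ, x = (β - θ) * p := ⟨_, rfl⟩
  have hq1 : 0 < q + 1 := by
    rw [hqdef]
    nlinarith [hθp]
  obtain ⟨r, hrdef⟩ : ∃ x : ℝ, x = (α - 1) * p + q + 1 := ⟨_, rfl⟩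
  have hr1 : 0 < r + 1 := by
    rw [hrdef, hqdef]
    nlinarith [hθp]
  have hqm : (-1:ℝ) < q := by linarith
  have hrm : (-1:ℝ) < r := by linarith
  obtain ⟨C, hCdef⟩ : ∃ x : ℝ, x = (-β) ^ (θ * p) / (q + 1) * (T ^ (r + 1) / (r + 1)) := ⟨_, rfl⟩
  have keynn : ∀ ε ∈ Set.Ioi (0:ℝ),
      0 ≤ ∫ s in (0:ℝ)..T, (T - s) ^ ((α - 1) * p) *
        ∫ v in s..T, |(T - v + ε) ^ β - (T - v) ^ β| ^ p := by
    intro ε _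
    apply intervalIntegral.integral_nonneg hT.le
    intro s hs
    have hinner : 0 ≤ ∫ v in s..T, |(T - v + ε) ^ β - (T - v) ^ β| ^ p :=
      intervalIntegral.integral_nonneg hs.2 (fun v _ => by positivity)
    exact mul_nonneg (Real.rpow_nonneg (sub_nonneg.mpr hs.2) _) hinner
  have key : ∀ ε ∈ Set.Ioi (0:ℝ),
      (∫ s in (0:ℝ)..T, (T - s) ^ ((α - 1) * p) *
        ∫ v in s..T, |(T - v + ε) ^ β - (T - v) ^ β| ^ p) ≤ C * ε ^ (θ * p) := by
    intro ε hε
    rw [Set.mem_Ioi] at hε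
    obtain ⟨K, hK⟩ : ∃ x : ℝ, x = (-β) ^ (θ * p) * ε ^ (θ * p) := ⟨_, rfl⟩
    have hK0 : 0 < K := by
      rw [hK]; exact mul_pos (Real.rpow_pos_of_pos hnb _) (Real.rpow_pos_of_pos hε _)
    have hIineq : ∀ s ∈ Set.Icc (0:ℝ) T,
        (∫ v in s..T, |(T - v + ε) ^ β - (T - v) ^ β| ^ p)
          ≤ K * ((T - s) ^ (q + 1) / (q + 1)) := by
      intro s hs
      have hBint : IntervalIntegrable (fun v => (T - v) ^ q) volume s T := by
        have := (intervalIntegral.intervalIntegrable_rpow' hqm (a := T - s) (b := T - T)).comp_sub_left T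
        simpa using this
      have hBval : (∫ v in s..T, K * (T - v) ^ q) = K * ((T - s) ^ (q + 1) / (q + 1)) := by
        rw [intervalIntegral.integral_const_mul]
        congr 1
        have h := intervalIntegral.integral_comp_sub_left (fun x : ℝ => x ^ q) T (a := s) (b := T)
        simp only [sub_self] at h
        rw [h, integral_rpow (Or.inl hqm), Real.zero_rpow (ne_of_gt hq1)]
        ring
      by_cases hint : IntervalIntegrable
          (fun v => |(T - v + ε) ^ β - (T - v) ^ β| ^ p) volume s T
      · have hae : (fun v => |(T - v + ε) ^ β - (T - v) ^ β| ^ p)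
            ≤ᵐ[volume.restrict (Set.Icc s T)] fun v => K * (T - v) ^ q := by
          have hT1 : ∀ᵐ (v : ℝ) ∂(volume.restrict (Set.Icc s T)), v ≠ T :=
            ae_restrict_of_ae (by simp [ae_iff, Set.setOf_eq_eq_singleton])
          have hT2 : ∀ᵐ (v : ℝ) ∂(volume.restrict (Set.Icc s T)), v ∈ Set.Icc s T :=
            ae_restrict_mem measurableSet_Icc
          filter_upwards [hT1, hT2] with v hvT hvm
          have hx : 0 < T - v := sub_pos.mpr (lt_of_le_of_ne hvm.2 hvT)
          have h3 := key_bound hβ0 hβ1 hθ0 hθ1 hx hε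
          calc |(T - v + ε) ^ β - (T - v) ^ β| ^ p
              ≤ ((-β) ^ θ * ε ^ θ * (T - v) ^ (β - θ)) ^ p :=
                Real.rpow_le_rpow (abs_nonneg _) h3 hp0.le
            _ = K * (T - v) ^ q := by
                rw [Real.mul_rpow (by positivity) (Real.rpow_nonneg hx.le _),
                  Real.mul_rpow (Real.rpow_nonneg hnb.le _) (Real.rpow_nonneg hε.le _),
                  ← Real.rpow_mul hnb.le, ← Real.rpow_mul hε.le, ← Real.rpow_mul hx.le,
                  hK, hqdef]
        exact le_trans
          (intervalIntegral.integral_mono_ae_restrict hs.2 hint (hBint.const_mul K) hae)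
          (le_of_eq hBval)
      · rw [intervalIntegral.integral_undef hint]
        have hTs : (0:ℝ) ≤ T - s := sub_nonneg.mpr hs.2
        have := Real.rpow_nonneg hTs (q + 1)
        positivity
    have houter : ∀ s ∈ Set.Icc (0:ℝ) T,
        (T - s) ^ ((α - 1) * p) * (∫ v in s..T, |(T - v + ε) ^ β - (T - v) ^ β| ^ p)
          ≤ K / (q + 1) * (T - s) ^ r := by
      intro s hs
      rcases eq_or_lt_of_le hs.2 with heq | hsT
      · rw [heq, sub_self, Real.zero_rpow (ne_of_lt (mul_neg_of_neg_of_pos (by linarith) hp0)),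
          zero_mul]
        exact mul_nonneg (div_nonneg hK0.le hq1.le) (Real.rpow_nonneg le_rfl _)
      · have hTs : 0 < T - s := sub_pos.mpr hsT
        have h4 := hIineq s hs
        calc (T - s) ^ ((α - 1) * p) * (∫ v in s..T, |(T - v + ε) ^ β - (T - v) ^ β| ^ p)
            ≤ (T - s) ^ ((α - 1) * p) * (K * ((T - s) ^ (q + 1) / (q + 1))) :=
              mul_le_mul_of_nonneg_left h4 (Real.rpow_nonneg hTs.le _)
          _ = K / (q + 1) * (T - s) ^ r := by
              have hsplit2 : (T - s) ^ r = (T - s) ^ ((α - 1) * p) * (T - s) ^ (q + 1) := by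
                rw [← Real.rpow_add hTs]; congr 1; rw [hrdef]; ring
              rw [hsplit2]
              generalize (T - s) ^ ((α - 1) * p) = A
              generalize (T - s) ^ (q + 1) = B
              ring
    by_cases hint2 : IntervalIntegrable (fun s => (T - s) ^ ((α - 1) * p) *
        ∫ v in s..T, |(T - v + ε) ^ β - (T - v) ^ β| ^ p) volume 0 T
    · have hg2 : IntervalIntegrable (fun s => K / (q + 1) * (T - s) ^ r) volume 0 T := by
        have := ((intervalIntegral.intervalIntegrable_rpow' hrm (a := T - 0) (b := T - T)).comp_sub_left T)
        simpa using this.const_mul (K / (q + 1))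
      have hmono := intervalIntegral.integral_mono_on hT.le hint2 hg2 houter
      have hval : (∫ s in (0:ℝ)..T, K / (q + 1) * (T - s) ^ r)
          = K / (q + 1) * (T ^ (r + 1) / (r + 1)) := by
        rw [intervalIntegral.integral_const_mul]
        congr 1
        have h := intervalIntegral.integral_comp_sub_left (fun x : ℝ => x ^ r) T
          (a := (0:ℝ)) (b := T)
        simp only [sub_self, sub_zero] at h
        rw [h, integral_rpow (Or.inl hrm), Real.zero_rpow (ne_of_gt hr1)]
        ring
      calc (∫ s in (0:ℝ)..T, (T - s) ^ ((α - 1) * p) *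
            ∫ v in s..T, |(T - v + ε) ^ β - (T - v) ^ β| ^ p)
          ≤ ∫ s in (0:ℝ)..T, K / (q + 1) * (T - s) ^ r := hmono
        _ = K / (q + 1) * (T ^ (r + 1) / (r + 1)) := hval
        _ = C * ε ^ (θ * p) := by rw [hK, hCdef]; ring
    · rw [intervalIntegral.integral_undef hint2]
      have hC0 : 0 ≤ C := by
        rw [hCdef]
        exact mul_nonneg (div_nonneg (Real.rpow_nonneg hnb.le _) hq1.le)
          (div_nonneg (Real.rpow_nonneg hT.le _) hr1.le)
      exact mul_nonneg hC0 (Real.rpow_nonneg hε.le _)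
  have hθp0 : 0 < θ * p := mul_pos hθ0 hp0
  have hCt : Tendsto (fun ε : ℝ => C * ε ^ (θ * p)) (nhdsWithin 0 (Set.Ioi 0)) (nhds 0) := by
    have hcont : ContinuousAt (fun ε : ℝ => ε ^ (θ * p)) 0 :=
      Real.continuousAt_rpow_const 0 (θ * p) (Or.inr hθp0.le)
    have h0 : Tendsto (fun ε : ℝ => ε ^ (θ * p)) (nhdsWithin 0 (Set.Ioi 0)) (nhds 0) := by
      have h0' : Tendsto (fun ε : ℝ => ε ^ (θ * p)) (nhdsWithin 0 (Set.Ioi 0))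
          (nhds ((0:ℝ) ^ (θ * p))) := hcont.tendsto.mono_left nhdsWithin_le_nhds
      rwa [Real.zero_rpow hθp0.ne'] at h0'
    simpa using h0.const_mul C
  refine squeeze_zero' ?_ ?_ hCt
  · exact eventually_nhdsWithin_of_forall keynn
  · exact eventually_nhdsWithin_of_forall key
end

section
/- Let β ∈ (-1,0), p ≥ 1, α ∈ (0,1) with 1 + βp > 0 and 3 + (α+β-3)p > 0, and let T > 0. Then ∫₀ᵀ (T-s)^{(α-1)p} ( ∫₀^s |((T-v+ε)^β - (T-v)^β) - ((s-v+ε)^β - (s-v)^β)|^p dv ) ds → 0 as ε → 0⁺. -/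
open MeasureTheory Real Filter Set Topology

/-!
Write `ḡ^ε(u) = (u + ε)^β - u^β` (`powIncrement β ε u`). For `β ≤ 0` this is nonpositive and
nondecreasing on `(0, ∞)`, so for `0 < s - v ≤ T - v` the difference `ḡ^ε(T - v) - ḡ^ε(s - v)`
lies in `[0, (s - v)^β]`. The inner integral is therefore dominated by
`∫₀ˢ (s - v)^(βp) dv ≤ T^(βp+1)/(βp+1)` uniformly in `ε`, while the weight `(T - s)^((α-1)p)` is
integrable since `3 + (α+β-3)p > 0` and `β < 0 ≤ p - 1` force `(α-1)p > -1`. As `ḡ^ε → 0`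
pointwise, dominated convergence in `v` and then in `s` gives the limit.
-/

lemma integrableOn_sub_rpow {r : ℝ} (hr : -1 < r) (s : ℝ) :
    IntegrableOn (fun v => (s - v) ^ r) (Ioo 0 s) := by
  have h := ((intervalIntegral.intervalIntegrable_rpow' (a := 0) (b := s) hr).comp_sub_left s).symm
  simp only [sub_zero, sub_self] at h
  exact h.1.mono_set Ioo_subset_Ioc_self

lemma integral_sub_rpow {r : ℝ} (hr : -1 < r) (s : ℝ) :
    ∫ v in (0 : ℝ)..s, (s - v) ^ r = s ^ (r + 1) / (r + 1) := by
  rw [intervalIntegral.integral_comp_sub_left (fun u => u ^ r) s, sub_self, sub_zero,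
    integral_rpow (Or.inl hr), zero_rpow (by linarith), sub_zero]

lemma MeasureTheory.StronglyMeasurable.setIntegral_Ioc_section {f : ℝ → ℝ → ℝ}
    (hf : StronglyMeasurable (Function.uncurry f)) {l u : ℝ → ℝ} (hl : Measurable l)
    (hu : Measurable u) : StronglyMeasurable fun s => ∫ v in Ioc (l s) (u s), f s v := by
  have hS : MeasurableSet {q : ℝ × ℝ | q.2 ∈ Ioc (l q.1) (u q.1)} :=
    (_root_.measurableSet_lt (hl.comp measurable_fst) measurable_snd).inter
      (_root_.measurableSet_le measurable_snd (hu.comp measurable_fst))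
  convert (hf.indicator hS).integral_prod_right' (ν := volume) using 2 with s
  rw [← integral_indicator measurableSet_Ioc]
  rfl

lemma MeasureTheory.StronglyMeasurable.intervalIntegral_section {f : ℝ → ℝ → ℝ}
    (hf : StronglyMeasurable (Function.uncurry f)) (a : ℝ) :
    StronglyMeasurable fun s => ∫ v in a..s, f s v :=
  (hf.setIntegral_Ioc_section measurable_const measurable_id).sub
    (hf.setIntegral_Ioc_section measurable_id measurable_const)

lemma tendsto_setIntegral_mul_of_bounded {α ι : Type*} [MeasurableSpace α] {μ : Measure α}
    {l : Filter ι} [l.IsCountablyGenerated] {S : Set α} {w : α → ℝ} {F : ι → α → ℝ} {C : ℝ}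
    (hS : MeasurableSet S) (hw : IntegrableOn w S μ)
    (hF : ∀ᶠ ε in l, AEStronglyMeasurable (F ε) (μ.restrict S))
    (hbound : ∀ᶠ ε in l, ∀ x ∈ S, ‖F ε x‖ ≤ C) (hlim : ∀ x ∈ S, Tendsto (F · x) l (𝓝 0)) :
    Tendsto (fun ε => ∫ x in S, w x * F ε x ∂μ) l (𝓝 0) := by
  simpa using tendsto_integral_filter_of_dominated_convergence (f := fun _ => 0)
    (fun x => ‖w x‖ * C) (hF.mono fun ε hε => hw.aestronglyMeasurable.mul hε)
    (hbound.mono fun ε hε => ae_restrict_of_forall_mem hS fun x hx => by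
      rw [Pi.mul_apply, norm_mul]
      exact mul_le_mul_of_nonneg_left (hε x hx) (norm_nonneg _))
    (hw.norm.mul_const C)
    (ae_restrict_of_forall_mem hS fun x hx => by simpa using (hlim x hx).const_mul (w x))

noncomputable def powIncrement (β ε u : ℝ) : ℝ := (u + ε) ^ β - u ^ β

section Increment

variable {β ε : ℝ}

lemma hasDerivAt_powIncrement (hε : 0 ≤ ε) {t : ℝ} (ht : 0 < t) :
    HasDerivAt (powIncrement β ε) (β * (t + ε) ^ (β - 1) - β * t ^ (β - 1)) t := by
  have hshift : HasDerivAt (fun u : ℝ => (u + ε) ^ β) (β * (t + ε) ^ (β - 1)) t := by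
    simpa [Function.comp_def] using (hasDerivAt_rpow_const (p := β)
      (Or.inl (by positivity : t + ε ≠ 0))).comp t ((hasDerivAt_id t).add_const ε)
  exact hshift.sub (hasDerivAt_rpow_const (Or.inl ht.ne'))

lemma monotoneOn_powIncrement (hβ : β ≤ 0) (hε : 0 ≤ ε) :
    MonotoneOn (powIncrement β ε) (Ioi 0) := by
  have hderiv := fun t (ht : t ∈ Ioi (0 : ℝ)) => hasDerivAt_powIncrement (β := β) hε ht
  refine monotoneOn_of_deriv_nonneg (convex_Ioi 0)
    (fun t ht => (hderiv t ht).continuousAt.continuousWithinAt)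
    (fun t ht => (hderiv t (interior_subset ht)).differentiableAt.differentiableWithinAt)
    fun t ht => ?_
  rw [interior_Ioi] at ht
  rw [(hderiv t ht).deriv, ← mul_sub]
  exact mul_nonneg_of_nonpos_of_nonpos hβ <| sub_nonpos.2 <|
    rpow_le_rpow_of_nonpos ht (le_add_of_nonneg_right hε) (by linarith)

lemma powIncrement_nonpos (hβ : β ≤ 0) (hε : 0 ≤ ε) {u : ℝ} (hu : 0 < u) :
    powIncrement β ε u ≤ 0 :=
  sub_nonpos.2 <| rpow_le_rpow_of_nonpos hu (le_add_of_nonneg_right hε) hβ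

lemma abs_powIncrement_sub_le (hβ : β ≤ 0) (hε : 0 ≤ ε) {x y : ℝ} (hx : 0 < x) (hxy : x ≤ y) :
    |powIncrement β ε y - powIncrement β ε x| ≤ x ^ β := by
  have hmono := monotoneOn_powIncrement hβ hε hx (hx.trans_le hxy) hxy
  have hy := powIncrement_nonpos hβ hε (hx.trans_le hxy)
  have hshift : 0 ≤ (x + ε) ^ β := rpow_nonneg (by linarith) β
  rw [abs_of_nonneg (sub_nonneg.2 hmono)]
  unfold powIncrement at *
  linarith

lemma continuousAt_powIncrement_zero {u : ℝ} (hu : u ≠ 0) :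
    ContinuousAt (fun ε => powIncrement β ε u) 0 :=
  ((continuousAt_const.add continuousAt_id).rpow_const (Or.inl (by simpa using hu))).sub
    continuousAt_const

@[fun_prop]
lemma Measurable.powIncrement {α : Type*} [MeasurableSpace α] {f g : α → ℝ} (hf : Measurable f)
    (hg : Measurable g) : Measurable fun x => powIncrement β (f x) (g x) := by
  unfold _root_.powIncrement
  fun_prop

@[simp]
lemma powIncrement_zero_left (u : ℝ) : powIncrement β 0 u = 0 := by
  simp [powIncrement]

end Increment

section InnerIntegral

variable {β p s T : ℝ}

lemma abs_powIncrement_sub_rpow_le (hβ : β ≤ 0) (hp : 0 ≤ p) {ε v : ℝ} (hε : 0 ≤ ε)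
    (hv : v < s) (hsT : s ≤ T) :
    |powIncrement β ε (T - v) - powIncrement β ε (s - v)| ^ p ≤ (s - v) ^ (β * p) := by
  have hx : 0 < s - v := sub_pos.2 hv
  calc _ ≤ ((s - v) ^ β) ^ p :=
        rpow_le_rpow (abs_nonneg _) (abs_powIncrement_sub_le hβ hε hx (by linarith)) hp
    _ = (s - v) ^ (β * p) := (rpow_mul hx.le β p).symm

lemma integrableOn_abs_powIncrement_sub (hβ : β ≤ 0) (hp : 0 ≤ p) (hβp : -1 < β * p) {ε : ℝ}
    (hε : 0 ≤ ε) (hsT : s ≤ T) :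
    IntegrableOn (fun v => |powIncrement β ε (T - v) - powIncrement β ε (s - v)| ^ p) (Ioo 0 s) :=
  (integrableOn_sub_rpow hβp s).mono'
    (by fun_prop : Measurable _).aestronglyMeasurable
    (ae_restrict_of_forall_mem measurableSet_Ioo fun v hv => by
      rw [norm_of_nonneg (rpow_nonneg (abs_nonneg _) p)]
      exact abs_powIncrement_sub_rpow_le hβ hp hε hv.2 hsT)

lemma integral_abs_powIncrement_sub_le (hβ : β ≤ 0) (hp : 0 ≤ p) (hβp : -1 < β * p) {ε : ℝ}
    (hε : 0 ≤ ε) (hs : 0 ≤ s) (hsT : s ≤ T) :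
    ∫ v in (0 : ℝ)..s, |powIncrement β ε (T - v) - powIncrement β ε (s - v)| ^ p
      ≤ s ^ (β * p + 1) / (β * p + 1) := by
  rw [← integral_sub_rpow hβp, intervalIntegral.integral_of_le hs,
    intervalIntegral.integral_of_le hs, integral_Ioc_eq_integral_Ioo,
    integral_Ioc_eq_integral_Ioo]
  exact setIntegral_mono_on (integrableOn_abs_powIncrement_sub hβ hp hβp hε hsT)
    (integrableOn_sub_rpow hβp s) measurableSet_Ioo
    fun v hv => abs_powIncrement_sub_rpow_le hβ hp hε hv.2 hsT

lemma tendsto_integral_abs_powIncrement_sub (hβ : β ≤ 0) (hp : 0 < p) (hβp : -1 < β * p)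
    (hs : 0 ≤ s) (hsT : s ≤ T) :
    Tendsto (fun ε => ∫ v in (0 : ℝ)..s,
      |powIncrement β ε (T - v) - powIncrement β ε (s - v)| ^ p) (𝓝[≥] 0) (𝓝 0) := by
  have hlim : ∀ v ∈ Ioo 0 s, Tendsto
      (fun ε => |powIncrement β ε (T - v) - powIncrement β ε (s - v)| ^ p) (𝓝[≥] 0) (𝓝 0) := by
    intro v hv
    have hcont := ((continuousAt_powIncrement_zero (β := β) (u := T - v) (by linarith [hv.2])).sub
      (continuousAt_powIncrement_zero (β := β) (sub_ne_zero.2 hv.2.ne'))).abs.rpow_const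
        (Or.inr hp.le)
    simpa [zero_rpow hp.ne'] using hcont.tendsto.mono_left nhdsWithin_le_nhds
  simp only [intervalIntegral.integral_of_le hs, integral_Ioc_eq_integral_Ioo]
  simpa using tendsto_integral_filter_of_dominated_convergence (f := fun _ => 0) _
    (Eventually.of_forall fun ε => (by fun_prop : Measurable _).aestronglyMeasurable)
    (eventually_nhdsWithin_of_forall fun ε hε =>
      ae_restrict_of_forall_mem measurableSet_Ioo fun v hv => by
        rw [norm_of_nonneg (rpow_nonneg (abs_nonneg _) p)]
        exact abs_powIncrement_sub_rpow_le hβ hp.le hε hv.2 hsT)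
    (integrableOn_sub_rpow hβp s)
    (ae_restrict_of_forall_mem measurableSet_Ioo hlim)

end InnerIntegral

theorem stmt_12_general (β p α T : ℝ) (hβ : β ∈ Set.Ioo (-1:ℝ) 0) (hp : 1 ≤ p)
    (h1 : 0 < 1 + β * p) (h2 : 0 < 3 + (α + β - 3) * p)
    (hT : 0 < T) :
    Tendsto (fun ε : ℝ => ∫ s in (0:ℝ)..T, (T - s) ^ ((α - 1) * p) *
        ∫ v in (0:ℝ)..s,
          |((T - v + ε) ^ β - (T - v) ^ β) - ((s - v + ε) ^ β - (s - v) ^ β)| ^ p)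
      (nhdsWithin 0 (Set.Ioi 0)) (nhds 0) := by
  have hβ0 : β ≤ 0 := hβ.2.le
  have hp0 : 0 < p := by linarith
  have hβp : -1 < β * p := by linarith
  have hαp : -1 < (α - 1) * p := by nlinarith [hβ.2]
  change Tendsto (fun ε => ∫ s in (0 : ℝ)..T, (T - s) ^ ((α - 1) * p) * ∫ v in (0 : ℝ)..s,
    |powIncrement β ε (T - v) - powIncrement β ε (s - v)| ^ p) _ _
  simp only [intervalIntegral.integral_of_le hT.le, integral_Ioc_eq_integral_Ioo]
  refine tendsto_setIntegral_mul_of_bounded (C := T ^ (β * p + 1) / (β * p + 1))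
    measurableSet_Ioo (integrableOn_sub_rpow hαp T)
    (Eventually.of_forall fun ε =>
      (StronglyMeasurable.intervalIntegral_section (by fun_prop) 0).aestronglyMeasurable)
    (eventually_nhdsWithin_of_forall fun ε (hε : 0 < ε) s hs => ?_)
    (fun s hs => (tendsto_integral_abs_powIncrement_sub hβ0 hp0 hβp hs.1.le hs.2.le).mono_left
      (nhdsWithin_mono _ Ioi_subset_Ici_self))
  rw [norm_of_nonneg (intervalIntegral.integral_nonneg hs.1.le
    fun v _ => rpow_nonneg (abs_nonneg _) p)]
  calc _ ≤ s ^ (β * p + 1) / (β * p + 1) :=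
        integral_abs_powIncrement_sub_le hβ0 hp0.le hβp hε.le hs.1.le hs.2.le
    _ ≤ T ^ (β * p + 1) / (β * p + 1) := by gcongr <;> linarith [hs.1, hs.2]

/-- Condition `(C_p)(ii)` for the kernel `g(u) = u^β`, `β ∈ (-1,0)`: if `p ≥ 1`,
`α ∈ (0,1)`, `1 + βp > 0`, `3 + (α+β-3)p > 0` and `T > 0`, then
`∫₀ᵀ (T-s)^{(α-1)p} (∫₀ˢ |((T-v+ε)^β - (T-v)^β) - ((s-v+ε)^β - (s-v)^β)|^p dv) ds → 0`
as `ε → 0⁺`. -/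
theorem stmt_12 (β p α T : ℝ) (hβ : β ∈ Set.Ioo (-1:ℝ) 0) (hp : 1 ≤ p)
    (hα : α ∈ Set.Ioo (0:ℝ) 1) (h1 : 0 < 1 + β * p) (h2 : 0 < 3 + (α + β - 3) * p)
    (hT : 0 < T) :
    Tendsto (fun ε : ℝ => ∫ s in (0:ℝ)..T, (T - s) ^ ((α - 1) * p) *
        ∫ v in (0:ℝ)..s,
          |((T - v + ε) ^ β - (T - v) ^ β) - ((s - v + ε) ^ β - (s - v) ^ β)| ^ p)
      (nhdsWithin 0 (Set.Ioi 0)) (nhds 0) :=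
  stmt_12_general β p α T hβ hp h1 h2 hT
end

section
/- Let β ∈ (-1,0), p ≥ 1, α ∈ (0,1) with 1 + βp > 0 and 3 + (α+β-3)p > 0, and let T > 0. Then ∫₀ᵀ ∫ₛᵀ (u-s)^{(α-2)p} ( ∫ₛᵘ |(u-v+ε)^β - (u-v)^β|^p dv ) du ds → 0 as ε → 0⁺. -/
/-!
For `-1 ≤ β ≤ 0` the increment `(w + ε)^β - w^β` is at most `w^β · min(1, ε/w) ≤ ε^θ w^(β-θ)`
for every `θ ∈ [0, 1]`. Taking `θ > 0` small enough that the exponents `(β - θ)p > -1` and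
`(α - 2)p + (β - θ)p > -2` stay integrable, the substitutions `w = u - v`, `L = u - s`,
`M = T - s` turn the triple integral into iterated primitives of a power bound, which is
`O(ε^(θp))`.
-/

open MeasureTheory Real Filter Set

lemma rpow_sub_rpow_add_le_mul_div {β w ε : ℝ} (hβ : -1 ≤ β) (hw : 0 < w) (hε : 0 ≤ ε) :
    w ^ β - (w + ε) ^ β ≤ w ^ β * (ε / (w + ε)) := by
  have hwε : 0 < w + ε := by linarith
  have hpow : w ^ β * w ≤ (w + ε) ^ β * (w + ε) := by
    rw [← rpow_add_one hw.ne', ← rpow_add_one hwε.ne']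
    exact rpow_le_rpow hw.le (by linarith) (by linarith)
  have hsplit : w ^ β * (ε / (w + ε)) = w ^ β - w ^ β * w / (w + ε) := by
    field_simp
    ring
  rw [hsplit]
  linarith [(div_le_iff₀ hwε).2 hpow]

lemma abs_rpow_add_sub_rpow_le {β θ w ε : ℝ} (hβ : β ∈ Icc (-1) 0) (hθ : θ ∈ Icc 0 1)
    (hw : 0 < w) (hε : 0 < ε) : |(w + ε) ^ β - w ^ β| ≤ ε ^ θ * w ^ (β - θ) := by
  have hratio : ε / (w + ε) ≤ (ε / w) ^ θ :=
    calc ε / (w + ε) ≤ (ε / (w + ε)) ^ θ :=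
          self_le_rpow_of_le_one (by positivity) (div_le_one_of_le₀ (by linarith) (by positivity))
            hθ.2
      _ ≤ (ε / w) ^ θ :=
          rpow_le_rpow (by positivity) (div_le_div_of_nonneg_left hε.le hw (by linarith)) hθ.1
  rw [abs_sub_comm, abs_of_nonneg (sub_nonneg.2 (rpow_le_rpow_of_nonpos hw (by linarith) hβ.2))]
  calc w ^ β - (w + ε) ^ β ≤ w ^ β * (ε / (w + ε)) := rpow_sub_rpow_add_le_mul_div hβ.1 hw hε.le
    _ ≤ w ^ β * (ε / w) ^ θ := by gcongr
    _ = ε ^ θ * w ^ (β - θ) := by rw [div_rpow hε.le hw.le, rpow_sub hw]; ring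

lemma abs_rpow_add_sub_rpow_rpow_le {β θ p w ε : ℝ} (hβ : β ∈ Icc (-1) 0) (hθ : θ ∈ Icc 0 1)
    (hp : 0 ≤ p) (hw : 0 < w) (hε : 0 < ε) :
    |(w + ε) ^ β - w ^ β| ^ p ≤ ε ^ (θ * p) * w ^ ((β - θ) * p) := by
  rw [rpow_mul hε.le, rpow_mul hw.le, ← mul_rpow (by positivity) (by positivity)]
  exact rpow_le_rpow (abs_nonneg _) (abs_rpow_add_sub_rpow_le hβ hθ hw hε) hp

lemma intervalIntegral_mem_Icc_of_mem_Icc_rpow {F : ℝ → ℝ} {c γ M L : ℝ} (hγ : -1 < γ)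
    (hF : ∀ x ∈ Ioc 0 M, F x ∈ Icc 0 (c * x ^ γ)) (hL : L ∈ Icc 0 M) :
    ∫ x in 0..L, F x ∈ Icc 0 (c / (γ + 1) * L ^ (γ + 1)) := by
  have hF' : ∀ x ∈ Ioc 0 L, F x ∈ Icc 0 (c * x ^ γ) := fun x hx => hF x ⟨hx.1, hx.2.trans hL.2⟩
  have hint : IntegrableOn (fun x => c * x ^ γ) (Ioc 0 L) :=
    (intervalIntegrable_iff_integrableOn_Ioc_of_le hL.1).1
      ((intervalIntegral.intervalIntegrable_rpow' hγ).const_mul c)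
  rw [intervalIntegral.integral_of_le hL.1]
  refine ⟨setIntegral_nonneg measurableSet_Ioc fun x hx => (hF' x hx).1, ?_⟩
  -- `F` need not be known integrable: it is squeezed between `0` and an integrable function.
  calc ∫ x in Ioc 0 L, F x ≤ ∫ x in Ioc 0 L, c * x ^ γ :=
        integral_mono_of_nonneg
          (ae_restrict_of_forall_mem measurableSet_Ioc fun x hx => (hF' x hx).1) hint
          (ae_restrict_of_forall_mem measurableSet_Ioc fun x hx => (hF' x hx).2)
    _ = c / (γ + 1) * L ^ (γ + 1) := by
        rw [integral_const_mul, ← intervalIntegral.integral_of_le hL.1, integral_rpow (.inl hγ),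
          zero_rpow (by linarith)]
        ring

lemma rpow_mul_intervalIntegral_mem_Icc_of_mem_Icc_rpow {F : ℝ → ℝ} {a c γ M : ℝ}
    (hγ : -1 < γ) (hF : ∀ x ∈ Ioc 0 M, F x ∈ Icc 0 (c * x ^ γ)) :
    ∀ L ∈ Ioc 0 M, L ^ a * ∫ x in 0..L, F x ∈ Icc 0 (c / (γ + 1) * L ^ (a + γ + 1)) := by
  intro L hL
  obtain ⟨h0, hle⟩ := intervalIntegral_mem_Icc_of_mem_Icc_rpow hγ hF (Ioc_subset_Icc_self hL)
  refine ⟨mul_nonneg (rpow_nonneg hL.1.le _) h0, ?_⟩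
  calc L ^ a * ∫ x in 0..L, F x ≤ L ^ a * (c / (γ + 1) * L ^ (γ + 1)) :=
        mul_le_mul_of_nonneg_left hle (rpow_nonneg hL.1.le a)
    _ = c / (γ + 1) * L ^ (a + γ + 1) := by
        rw [show a + γ + 1 = a + (γ + 1) by ring, rpow_add hL.1 a]
        ring

theorem integral_integral_rpow_mul_integral_mem_Icc {f : ℝ → ℝ} {a c γ T : ℝ} (hγ : -1 < γ)
    (haγ : -2 < a + γ) (hT : 0 ≤ T) (hf : ∀ w ∈ Ioc 0 T, f w ∈ Icc 0 (c * w ^ γ)) :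
    ∫ M in 0..T, ∫ L in 0..M, L ^ a * ∫ w in 0..L, f w ∈
      Icc 0 (c * (T ^ (a + γ + 3) / ((γ + 1) * (a + γ + 2) * (a + γ + 3)))) := by
  have hweighted := rpow_mul_intervalIntegral_mem_Icc_of_mem_Icc_rpow (a := a) hγ hf
  have hmiddle : ∀ M ∈ Ioc 0 T, ∫ L in 0..M, L ^ a * ∫ w in 0..L, f w ∈
      Icc 0 (c / (γ + 1) / (a + γ + 2) * M ^ (a + γ + 2)) := fun M hM => by
    have h := intervalIntegral_mem_Icc_of_mem_Icc_rpow (by linarith) hweighted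
      (Ioc_subset_Icc_self hM)
    rwa [show a + γ + 1 + 1 = a + γ + 2 by ring] at h
  have h := intervalIntegral_mem_Icc_of_mem_Icc_rpow (by linarith) hmiddle ⟨hT, le_rfl⟩
  rw [show a + γ + 2 + 1 = a + γ + 3 by ring] at h
  convert h using 2
  field_simp

theorem integral_integral_integral_comp_sub (f : ℝ → ℝ) (a T : ℝ) :
    ∫ s in 0..T, ∫ u in s..T, (u - s) ^ a * ∫ v in s..u, f (u - v) =
      ∫ M in 0..T, ∫ L in 0..M, L ^ a * ∫ w in 0..L, f w := by
  simp only [intervalIntegral.integral_comp_sub_left, sub_self]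
  simp only [intervalIntegral.integral_comp_sub_right (fun L => L ^ a * ∫ w in 0..L, f w),
    sub_self]
  rw [intervalIntegral.integral_comp_sub_left (fun M => ∫ L in 0..M, L ^ a * ∫ w in 0..L, f w),
    sub_self, sub_zero]

theorem stmt_13_general (β p α T : ℝ) (hβ : β ∈ Set.Ioo (-1:ℝ) 0) (hp : 1 ≤ p)
    (h1 : 0 < 1 + β * p) (h2 : 0 < 3 + (α + β - 3) * p)
    (hT : 0 < T) :
    Tendsto (fun ε : ℝ => ∫ s in (0:ℝ)..T, ∫ u in s..T, (u - s) ^ ((α - 2) * p) *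
        ∫ v in s..u, |(u - v + ε) ^ β - (u - v) ^ β| ^ p)
      (nhdsWithin 0 (Set.Ioi 0)) (nhds 0) := by
  have hp0 : 0 < p := by linarith
  obtain ⟨κ, hκ0, hκ⟩ := exists_between (lt_min h1 (by nlinarith : 0 < (α + β - 2) * p + 2))
  have hκ1 : κ < 1 + β * p := hκ.trans_le (min_le_left _ _)
  have hκ2 : κ < (α + β - 2) * p + 2 := hκ.trans_le (min_le_right _ _)
  set θ := κ / p
  have hθp : θ * p = κ := div_mul_cancel₀ κ hp0.ne'
  have hθ : θ ∈ Icc 0 1 := ⟨by positivity, (div_le_one hp0).2 (by nlinarith [hβ.2])⟩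
  have hγ : -1 < (β - θ) * p := by rw [sub_mul, hθp]; linarith
  have haγ : -2 < (α - 2) * p + (β - θ) * p := by rw [sub_mul β, hθp]; linarith
  have hbound : ∀ ε ∈ Ioi (0 : ℝ),
      ∫ s in (0:ℝ)..T, ∫ u in s..T, (u - s) ^ ((α - 2) * p) *
        ∫ v in s..u, |(u - v + ε) ^ β - (u - v) ^ β| ^ p ∈
      Icc 0 (ε ^ κ * (T ^ ((α - 2) * p + (β - θ) * p + 3) / (((β - θ) * p + 1) *
        ((α - 2) * p + (β - θ) * p + 2) * ((α - 2) * p + (β - θ) * p + 3)))) := by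
    intro ε hε
    rw [← hθp, integral_integral_integral_comp_sub (fun w => |(w + ε) ^ β - w ^ β| ^ p)]
    exact integral_integral_rpow_mul_integral_mem_Icc hγ haγ hT.le fun w hw =>
      ⟨rpow_nonneg (abs_nonneg _) p,
        abs_rpow_add_sub_rpow_rpow_le ⟨hβ.1.le, hβ.2.le⟩ hθ hp0.le hw.1 hε⟩
  refine squeeze_zero' (eventually_nhdsWithin_of_forall fun ε hε => (hbound ε hε).1)
    (eventually_nhdsWithin_of_forall fun ε hε => (hbound ε hε).2) ?_
  simpa using ((tendsto_nhdsWithin_of_tendsto_nhds tendsto_id).rpow_const_nhds_zero hκ0).mul_const _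

/-- Condition `(C_p)(iii)` for the kernel `g(u) = u^β`, `β ∈ (-1,0)`: if `p ≥ 1`,
`α ∈ (0,1)`, `1 + βp > 0`, `3 + (α+β-3)p > 0` and `T > 0`, then
`∫₀ᵀ ∫ₛᵀ (u-s)^{(α-2)p} (∫ₛᵘ |(u-v+ε)^β - (u-v)^β|^p dv) du ds → 0` as `ε → 0⁺`. -/
theorem stmt_13 (β p α T : ℝ) (hβ : β ∈ Set.Ioo (-1:ℝ) 0) (hp : 1 ≤ p)
    (hα : α ∈ Set.Ioo (0:ℝ) 1) (h1 : 0 < 1 + β * p) (h2 : 0 < 3 + (α + β - 3) * p)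
    (hT : 0 < T) :
    Tendsto (fun ε : ℝ => ∫ s in (0:ℝ)..T, ∫ u in s..T, (u - s) ^ ((α - 2) * p) *
        ∫ v in s..u, |(u - v + ε) ^ β - (u - v) ^ β| ^ p)
      (nhdsWithin 0 (Set.Ioi 0)) (nhds 0) :=
  stmt_13_general β p α T hβ hp h1 h2 hT
end

section
/- Let β ∈ (-1,0), p ≥ 1, α ∈ (0,1) with 1 + βp > 0 and 3 + (α+β-3)p > 0, and let T > 0. Then ∫₀ᵀ ∫ₛᵀ (u-s)^{(α-2)p} ( ∫₀^s |((u-v+ε)^β - (u-v)^β) - ((s-v+ε)^β - (s-v)^β)|^p dv ) du ds → 0 as ε → 0⁺. -/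
/-!
Write `x = s - v` and `h = u - s`. Since `t ↦ t ^ β` decreases and `t ^ β - (t + δ) ^ β ≤ δ t ^ (β - 1)`
for `β ≥ -1`, the second difference `Δ` under the absolute value is a difference of two numbers in
`[0, B]` for each of `B = x ^ β`, `ε x ^ (β - 1)` and `h x ^ (β - 1)`. Interpolating these bounds gives
`|Δ| ≤ h ^ l ε ^ m x ^ (β - l - m)`, and the hypotheses on `α, β, p` leave room for `l, m > 0` with
`x ^ ((β - l - m) p)` integrable in `v` and `h ^ ((α - 2 + l) p)` integrable in `u`. Hence the
triple integral is `O(ε ^ (m p))`.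
-/

open MeasureTheory Real Filter Set intervalIntegral Topology

namespace Real

lemma rpow_sub_rpow_add_nonneg {β x δ : ℝ} (hβ : β ≤ 0) (hx : 0 < x) (hδ : 0 ≤ δ) :
    0 ≤ x ^ β - (x + δ) ^ β :=
  sub_nonneg.2 (rpow_le_rpow_of_nonpos hx (by linarith) hβ)

lemma rpow_sub_rpow_add_le_rpow {β a x δ : ℝ} (hβ : β ≤ 0) (ha : 0 < a) (hax : a ≤ x)
    (hδ : 0 ≤ δ) : x ^ β - (x + δ) ^ β ≤ a ^ β := by
  have := rpow_le_rpow_of_nonpos ha hax hβ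
  have := rpow_nonneg (x := x + δ) (by linarith [ha.trans_le hax]) β
  linarith

lemma rpow_sub_rpow_add_le_mul {β a x δ : ℝ} (hβ : β ∈ Icc (-1) 0) (ha : 0 < a) (hax : a ≤ x)
    (hδ : 0 ≤ δ) : x ^ β - (x + δ) ^ β ≤ δ * a ^ (β - 1) := by
  have hx : 0 < x := ha.trans_le hax
  have hxδ : 0 < x + δ := by linarith
  -- `(x + δ) ^ β = (x + δ) ^ (β + 1) / (x + δ)` and `β + 1 ≥ 0`
  have hlow : x ^ (β + 1) / (x + δ) ≤ (x + δ) ^ β := by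
    rw [div_le_iff₀ hxδ, ← rpow_add_one hxδ.ne']
    exact rpow_le_rpow hx.le (by linarith) (by linarith [hβ.1])
  have hquot : x ^ β - x ^ (β + 1) / (x + δ) = δ * x ^ (β - 1) * (x / (x + δ)) := by
    rw [rpow_add_one hx.ne', rpow_sub_one hx.ne']
    field_simp
    ring
  calc x ^ β - (x + δ) ^ β ≤ δ * x ^ (β - 1) * (x / (x + δ)) := by linarith
    _ ≤ δ * x ^ (β - 1) * 1 := by
        gcongr
        exact div_le_one_of_le₀ (by linarith) hxδ.le
    _ ≤ δ * a ^ (β - 1) := by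
        rw [mul_one]
        exact mul_le_mul_of_nonneg_left (rpow_le_rpow_of_nonpos ha hax (by linarith [hβ.2])) hδ

lemma le_rpow_mul_rpow_mul_rpow {d a b c l m : ℝ} (hd : 0 ≤ d) (ha : d ≤ a) (hb : d ≤ b)
    (hc : d ≤ c) (hl : 0 < l) (hm : 0 ≤ m) (hlm : l + m ≤ 1) :
    d ≤ a ^ l * b ^ m * c ^ (1 - l - m) :=
  calc d = d ^ l * d ^ m * d ^ (1 - l - m) := by
        rw [← rpow_add' hd (by linarith), ← rpow_add' hd (by ring_nf; norm_num)]
        ring_nf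
        exact (rpow_one d).symm
    _ ≤ a ^ l * b ^ m * c ^ (1 - l - m) := by
        have ha' := rpow_nonneg (hd.trans ha) l
        have hb' := rpow_nonneg (hd.trans hb) m
        gcongr
        linarith

end Real

lemma abs_rpow_increment_sub_le {β l m x y ε : ℝ} (hβ : β ∈ Icc (-1) 0) (hl : 0 < l)
    (hm : 0 ≤ m) (hlm : l + m ≤ 1) (hx : 0 < x) (hxy : x ≤ y) (hε : 0 ≤ ε) :
    |((y + ε) ^ β - y ^ β) - ((x + ε) ^ β - x ^ β)| ≤ (y - x) ^ l * ε ^ m * x ^ (β - l - m) := by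
  have hyx : 0 ≤ y - x := by linarith
  -- the second difference is a difference of two increments, in `ε` or in `y - x`
  have hε_incr : ((y + ε) ^ β - y ^ β) - ((x + ε) ^ β - x ^ β) =
      (x ^ β - (x + ε) ^ β) - (y ^ β - (y + ε) ^ β) := by ring
  have hyx_incr : ((y + ε) ^ β - y ^ β) - ((x + ε) ^ β - x ^ β) =
      (x ^ β - (x + (y - x)) ^ β) - ((x + ε) ^ β - (x + ε + (y - x)) ^ β) := by ring_nf
  have h1 : |((y + ε) ^ β - y ^ β) - ((x + ε) ^ β - x ^ β)| ≤ (y - x) * x ^ (β - 1) := by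
    rw [hyx_incr]
    exact abs_sub_le_of_nonneg_of_le (rpow_sub_rpow_add_nonneg hβ.2 hx hyx)
      (rpow_sub_rpow_add_le_mul hβ hx le_rfl hyx)
      (rpow_sub_rpow_add_nonneg hβ.2 (by linarith) hyx)
      (rpow_sub_rpow_add_le_mul hβ hx (by linarith) hyx)
  have h2 : |((y + ε) ^ β - y ^ β) - ((x + ε) ^ β - x ^ β)| ≤ ε * x ^ (β - 1) := by
    rw [hε_incr]
    exact abs_sub_le_of_nonneg_of_le (rpow_sub_rpow_add_nonneg hβ.2 hx hε)
      (rpow_sub_rpow_add_le_mul hβ hx le_rfl hε)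
      (rpow_sub_rpow_add_nonneg hβ.2 (by linarith) hε)
      (rpow_sub_rpow_add_le_mul hβ hx hxy hε)
  have h3 : |((y + ε) ^ β - y ^ β) - ((x + ε) ^ β - x ^ β)| ≤ x ^ β := by
    rw [hε_incr]
    exact abs_sub_le_of_nonneg_of_le (rpow_sub_rpow_add_nonneg hβ.2 hx hε)
      (rpow_sub_rpow_add_le_rpow hβ.2 hx le_rfl hε)
      (rpow_sub_rpow_add_nonneg hβ.2 (by linarith) hε)
      (rpow_sub_rpow_add_le_rpow hβ.2 hx hxy hε)
  refine (le_rpow_mul_rpow_mul_rpow (abs_nonneg _) h1 h2 h3 hl hm hlm).trans_eq ?_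
  have hexp : β - l - m = (β - 1) * l + (β - 1) * m + β * (1 - l - m) := by ring
  rw [mul_rpow hyx (rpow_nonneg hx.le _), mul_rpow hε (rpow_nonneg hx.le _), ← rpow_mul hx.le,
    ← rpow_mul hx.le, ← rpow_mul hx.le, hexp, rpow_add hx, rpow_add hx]
  ring

lemma integral_le_of_le_mul_rpow_sub {f : ℝ → ℝ} {a b C c : ℝ} (hab : a ≤ b) (hc : -1 < c)
    (hf0 : ∀ x ∈ Ioc a b, 0 ≤ f x) (hf : ∀ x ∈ Ioc a b, f x ≤ C * (x - a) ^ c) :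
    ∫ x in a..b, f x ≤ C * ((b - a) ^ (c + 1) / (c + 1)) := by
  have hg : IntervalIntegrable (fun x => C * (x - a) ^ c) volume a b := by
    have := (intervalIntegrable_rpow' hc (a := 0) (b := b - a)).comp_sub_right a
    rw [zero_add, sub_add_cancel] at this
    exact this.const_mul C
  calc ∫ x in a..b, f x ≤ ∫ x in a..b, C * (x - a) ^ c := by
        rw [integral_of_le hab, integral_of_le hab]
        exact integral_mono_of_nonneg (ae_restrict_of_forall_mem measurableSet_Ioc hf0)
          (hg.1) (ae_restrict_of_forall_mem measurableSet_Ioc hf)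
    _ = C * ((b - a) ^ (c + 1) / (c + 1)) := by
        rw [intervalIntegral.integral_const_mul, integral_comp_sub_right (fun x => x ^ c), sub_self,
          integral_rpow (Or.inl hc), zero_rpow (by linarith), sub_zero]

noncomputable def secondDiff (β ε u s v : ℝ) : ℝ :=
  ((u - v + ε) ^ β - (u - v) ^ β) - ((s - v + ε) ^ β - (s - v) ^ β)

section

variable {α β p l m ε : ℝ}

lemma integral_abs_secondDiff_rpow_le (hβ : β ∈ Icc (-1) 0) (hp : 0 ≤ p) (hl : 0 < l)
    (hm : 0 ≤ m) (hlm : l + m ≤ 1) (hc : -1 < (β - l - m) * p) (hε : 0 ≤ ε) {s u : ℝ}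
    (hs : 0 ≤ s) (hsu : s ≤ u) :
    ∫ v in (0:ℝ)..s, |secondDiff β ε u s v| ^ p ≤
      ε ^ (m * p) * (u - s) ^ (l * p) *
        (s ^ ((β - l - m) * p + 1) / ((β - l - m) * p + 1)) := by
  have hflip := integral_comp_sub_left (fun v => |secondDiff β ε u s v| ^ p) s (a := 0) (b := s)
  rw [sub_self, sub_zero] at hflip
  rw [← hflip]
  have := integral_le_of_le_mul_rpow_sub (f := fun w => |secondDiff β ε u s (s - w)| ^ p)
    (C := ε ^ (m * p) * (u - s) ^ (l * p)) hs hc (fun w _ => rpow_nonneg (abs_nonneg _) _) ?_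
  · simpa only [sub_zero] using this
  intro w hw
  have hus : 0 ≤ u - s := by linarith
  have hpoint := abs_rpow_increment_sub_le hβ hl hm hlm hw.1 (y := u - s + w) (by linarith) hε
  rw [add_sub_cancel_right] at hpoint
  rw [secondDiff, sub_sub_cancel, show u - (s - w) = u - s + w by ring, sub_zero]
  calc _ ≤ ((u - s) ^ l * ε ^ m * w ^ (β - l - m)) ^ p :=
        rpow_le_rpow (abs_nonneg _) hpoint hp
    _ = ε ^ (m * p) * (u - s) ^ (l * p) * w ^ ((β - l - m) * p) := by
        rw [mul_rpow (mul_nonneg (rpow_nonneg hus _) (rpow_nonneg hε _)) (rpow_nonneg hw.1.le _),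
          mul_rpow (rpow_nonneg hus _) (rpow_nonneg hε _), rpow_mul hus, rpow_mul hε,
          rpow_mul hw.1.le]
        ring

lemma integral_mul_integral_abs_secondDiff_rpow_nonneg {s T : ℝ} (hs : 0 ≤ s) (hsT : s ≤ T) :
    0 ≤ ∫ u in s..T, (u - s) ^ ((α - 2) * p) * ∫ v in (0:ℝ)..s, |secondDiff β ε u s v| ^ p :=
  integral_nonneg hsT fun _ hu => mul_nonneg (rpow_nonneg (sub_nonneg.2 hu.1) _)
    (integral_nonneg hs fun _ _ => rpow_nonneg (abs_nonneg _) _)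

lemma integral_mul_integral_abs_secondDiff_rpow_le (hβ : β ∈ Icc (-1) 0) (hp : 0 ≤ p)
    (hl : 0 < l) (hm : 0 ≤ m) (hlm : l + m ≤ 1) (hcv : -1 < (β - l - m) * p)
    (hcu : -1 < (α - 2 + l) * p) (hε : 0 ≤ ε) {s T : ℝ} (hs : 0 ≤ s) (hsT : s ≤ T) :
    ∫ u in s..T, (u - s) ^ ((α - 2) * p) * ∫ v in (0:ℝ)..s, |secondDiff β ε u s v| ^ p ≤
      ε ^ (m * p) * (T ^ ((β - l - m) * p + 1) / ((β - l - m) * p + 1)) *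
        ((T - s) ^ ((α - 2 + l) * p + 1) / ((α - 2 + l) * p + 1)) := by
  refine integral_le_of_le_mul_rpow_sub hsT hcu (fun u hu => mul_nonneg
    (rpow_nonneg (by linarith [hu.1]) _)
    (integral_nonneg hs fun _ _ => rpow_nonneg (abs_nonneg _) _)) fun u hu => ?_
  have hus : 0 < u - s := by linarith [hu.1]
  have hsT' : s ^ ((β - l - m) * p + 1) ≤ T ^ ((β - l - m) * p + 1) :=
    rpow_le_rpow hs hsT (by linarith)
  calc (u - s) ^ ((α - 2) * p) * ∫ v in (0:ℝ)..s, |secondDiff β ε u s v| ^ p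
      ≤ (u - s) ^ ((α - 2) * p) * (ε ^ (m * p) * (u - s) ^ (l * p) *
          (T ^ ((β - l - m) * p + 1) / ((β - l - m) * p + 1))) := by
        gcongr
        exact (integral_abs_secondDiff_rpow_le hβ hp hl hm hlm hcv hε hs hu.1.le).trans
          (by gcongr; linarith)
    _ = ε ^ (m * p) * (T ^ ((β - l - m) * p + 1) / ((β - l - m) * p + 1)) *
          (u - s) ^ ((α - 2 + l) * p) := by
        rw [add_mul, rpow_add hus]
        ring

lemma integral_integral_mul_integral_abs_secondDiff_rpow_le (hβ : β ∈ Icc (-1) 0)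
    (hp : 0 ≤ p) (hl : 0 < l) (hm : 0 ≤ m) (hlm : l + m ≤ 1) (hcv : -1 < (β - l - m) * p)
    (hcu : -1 < (α - 2 + l) * p) (hε : 0 ≤ ε) {T : ℝ} (hT : 0 ≤ T) :
    ∫ s in (0:ℝ)..T, ∫ u in s..T, (u - s) ^ ((α - 2) * p) *
        ∫ v in (0:ℝ)..s, |secondDiff β ε u s v| ^ p ≤
      ε ^ (m * p) * (T ^ ((β - l - m) * p + 1) / ((β - l - m) * p + 1) *
        (T ^ ((α - 2 + l) * p + 1) / ((α - 2 + l) * p + 1)) * T) := by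
  refine (le_abs_self _).trans ?_
  have hbound := norm_integral_le_of_norm_le_const (a := 0) (b := T) (f := fun s =>
    ∫ u in s..T, (u - s) ^ ((α - 2) * p) * ∫ v in (0:ℝ)..s, |secondDiff β ε u s v| ^ p)
    (C := ε ^ (m * p) * (T ^ ((β - l - m) * p + 1) / ((β - l - m) * p + 1)) *
      (T ^ ((α - 2 + l) * p + 1) / ((α - 2 + l) * p + 1))) ?_
  · rw [norm_eq_abs, sub_zero, abs_of_nonneg hT] at hbound
    linarith
  intro s hs
  rw [uIoc_of_le hT] at hs
  rw [norm_eq_abs, abs_of_nonneg (integral_mul_integral_abs_secondDiff_rpow_nonneg hs.1.le hs.2)]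
  refine (integral_mul_integral_abs_secondDiff_rpow_le hβ hp hl hm hlm hcv hcu hε hs.1.le
    hs.2).trans ?_
  refine mul_le_mul_of_nonneg_left (div_le_div_of_nonneg_right
    (rpow_le_rpow (by linarith [hs.2]) (by linarith [hs.1]) (by linarith)) (by linarith))
    (mul_nonneg (rpow_nonneg hε _) (div_nonneg (rpow_nonneg hT _) (by linarith)))

end

lemma exists_interpolation_exponents {α β p : ℝ} (hβ : β < 0) (hp : 1 ≤ p)
    (h1 : 0 < 1 + β * p) (h2 : 0 < 3 + (α + β - 3) * p) :
    ∃ l m : ℝ, 0 < l ∧ 0 < m ∧ l + m ≤ 1 ∧ -1 < (β - l - m) * p ∧ -1 < (α - 2 + l) * p := by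
  have hp0 : 0 < p := by linarith
  have hAB : max 0 ((2 - α) * p - 1) < 1 + β * p := max_lt h1 (by linarith)
  obtain ⟨L, hAL, hLB⟩ := exists_between hAB
  obtain ⟨M, hLM, hMB⟩ := exists_between hLB
  have hA := le_max_left 0 ((2 - α) * p - 1)
  have hA' := le_max_right 0 ((2 - α) * p - 1)
  have hβp : β * p < 0 := mul_neg_of_neg_of_pos hβ hp0
  refine ⟨L / p, (M - L) / p, div_pos (by linarith) hp0, div_pos (by linarith) hp0, ?_, ?_, ?_⟩
  · rw [← add_div, div_le_one hp0]
    linarith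
  · field_simp
    linarith
  · field_simp
    linarith

theorem stmt_14_general (β p α T : ℝ) (hβ : β ∈ Set.Ioo (-1:ℝ) 0) (hp : 1 ≤ p)
    (h1 : 0 < 1 + β * p) (h2 : 0 < 3 + (α + β - 3) * p)
    (hT : 0 < T) :
    Tendsto (fun ε : ℝ => ∫ s in (0:ℝ)..T, ∫ u in s..T, (u - s) ^ ((α - 2) * p) *
        ∫ v in (0:ℝ)..s,
          |((u - v + ε) ^ β - (u - v) ^ β) - ((s - v + ε) ^ β - (s - v) ^ β)| ^ p)
      (nhdsWithin 0 (Set.Ioi 0)) (nhds 0) := by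
  obtain ⟨l, m, hl, hm, hlm, hcv, hcu⟩ := exists_interpolation_exponents hβ.2 hp h1 h2
  have hp0 : 0 ≤ p := by linarith
  set K := T ^ ((β - l - m) * p + 1) / ((β - l - m) * p + 1) *
    (T ^ ((α - 2 + l) * p + 1) / ((α - 2 + l) * p + 1)) * T
  have hlim : Tendsto (fun ε : ℝ => ε ^ (m * p) * K) (𝓝[>] 0) (𝓝 0) := by
    have hmp : 0 < m * p := by positivity
    have := ((continuous_rpow_const hmp.le).tendsto 0).mul_const K
    rw [zero_rpow hmp.ne', zero_mul] at this
    exact this.mono_left nhdsWithin_le_nhds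
  refine squeeze_zero' (eventually_nhdsWithin_of_forall fun ε _ => ?_)
    (eventually_nhdsWithin_of_forall fun ε hε => ?_) hlim
  · exact integral_nonneg hT.le fun s hs =>
      integral_mul_integral_abs_secondDiff_rpow_nonneg hs.1 hs.2
  · exact integral_integral_mul_integral_abs_secondDiff_rpow_le (Ioo_subset_Icc_self hβ) hp0 hl
      hm.le hlm hcv hcu (le_of_lt hε) hT.le

/-- Condition `(C_p)(iv)` for the kernel `g(u) = u^β`, `β ∈ (-1,0)`: if `p ≥ 1`,
`α ∈ (0,1)`, `1 + βp > 0`, `3 + (α+β-3)p > 0` and `T > 0`, then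
`∫₀ᵀ ∫ₛᵀ (u-s)^{(α-2)p} (∫₀ˢ |((u-v+ε)^β - (u-v)^β) - ((s-v+ε)^β - (s-v)^β)|^p dv) du ds → 0`
as `ε → 0⁺`. -/
theorem stmt_14 (β p α T : ℝ) (hβ : β ∈ Set.Ioo (-1:ℝ) 0) (hp : 1 ≤ p)
    (hα : α ∈ Set.Ioo (0:ℝ) 1) (h1 : 0 < 1 + β * p) (h2 : 0 < 3 + (α + β - 3) * p)
    (hT : 0 < T) :
    Tendsto (fun ε : ℝ => ∫ s in (0:ℝ)..T, ∫ u in s..T, (u - s) ^ ((α - 2) * p) *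
        ∫ v in (0:ℝ)..s,
          |((u - v + ε) ^ β - (u - v) ^ β) - ((s - v + ε) ^ β - (s - v) ^ β)| ^ p)
      (nhdsWithin 0 (Set.Ioi 0)) (nhds 0) :=
  stmt_14_general β p α T hβ hp h1 h2 hT
end

section
/- Let β ∈ (0,1), p ≥ 1, α ∈ (0,1) with 2 + (α-2)p > 0 and 1 + (β-1)p > 0, and let T > 0. Then ∫₀ᵀ (T-s)^{(α-1)p} ( ∫ₛᵀ |(T-v+ε)^β - (T-v)^β|^p dv ) ds → 0 as ε → 0⁺. -/
/-!
Since `u ↦ u ^ β` is subadditive for `β ∈ [0, 1]`, `|(x + ε) ^ β - x ^ β| ≤ ε ^ β` uniformly in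
`x ≥ 0`. Hence the inner integral is at most `ε ^ (β p) (T - s)`, and the whole expression is at
most `ε ^ (β p) ∫₀ᵀ (T - s) ^ ((α - 1) p + 1) ds`, a finite multiple of `ε ^ (β p)` because
`(α - 1) p + 1 > p - 1 ≥ 0`.
-/

open MeasureTheory Real Filter Set Topology

lemma abs_rpow_add_sub_rpow_le_s15 {x y b : ℝ} (hx : 0 ≤ x) (hy : 0 ≤ y) (hb₀ : 0 ≤ b) (hb₁ : b ≤ 1) :
    |(x + y) ^ b - x ^ b| ≤ y ^ b := by
  rw [abs_of_nonneg (sub_nonneg.2 (rpow_le_rpow hx (le_add_of_nonneg_right hy) hb₀))]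
  linarith [rpow_add_le_add_rpow hx hy hb₀ hb₁]

lemma norm_integral_abs_rpow_add_sub_rpow_pow_le {s T ε β p : ℝ} (hsT : s ≤ T) (hε : 0 ≤ ε)
    (hβ₀ : 0 ≤ β) (hβ₁ : β ≤ 1) (hp : 0 ≤ p) :
    ‖∫ v in s..T, |(T - v + ε) ^ β - (T - v) ^ β| ^ p‖ ≤ ε ^ (β * p) * (T - s) := by
  have h := intervalIntegral.norm_integral_le_of_norm_le_const (C := ε ^ (β * p))
    (f := fun v => |(T - v + ε) ^ β - (T - v) ^ β| ^ p) (a := s) (b := T) fun v hv => by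
      rw [uIoc_of_le hsT] at hv
      rw [norm_of_nonneg (by positivity), rpow_mul hε]
      exact rpow_le_rpow (abs_nonneg _)
        (abs_rpow_add_sub_rpow_le_s15 (by linarith [hv.2]) hε hβ₀ hβ₁) hp
  rwa [abs_of_nonneg (sub_nonneg.2 hsT)] at h

lemma norm_integral_rpow_mul_le {a T γ M : ℝ} {F : ℝ → ℝ} (haT : a ≤ T) (hγ : 0 < γ + 1)
    (hF : ∀ s ∈ Ioc a T, ‖F s‖ ≤ M * (T - s)) :
    ‖∫ s in a..T, (T - s) ^ γ * F s‖ ≤ M * ∫ s in a..T, (T - s) ^ (γ + 1) := by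
  have hcont : Continuous fun s : ℝ => (T - s) ^ (γ + 1) :=
    (continuous_const.sub continuous_id).rpow_const fun _ => Or.inr hγ.le
  rw [← intervalIntegral.integral_const_mul]
  refine intervalIntegral.norm_integral_le_of_norm_le haT (.of_forall fun s hs => ?_)
    ((hcont.intervalIntegrable a T).const_mul M)
  have hTs : 0 ≤ T - s := sub_nonneg.2 hs.2
  calc ‖(T - s) ^ γ * F s‖ = (T - s) ^ γ * ‖F s‖ := by
        rw [norm_mul, norm_of_nonneg (rpow_nonneg hTs γ)]
    _ ≤ (T - s) ^ γ * (M * (T - s)) := mul_le_mul_of_nonneg_left (hF s hs) (rpow_nonneg hTs γ)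
    _ = M * (T - s) ^ (γ + 1) := by rw [rpow_add' hTs hγ.ne', rpow_one]; ring

theorem stmt_15_general (β p α T : ℝ) (hβ : β ∈ Set.Ioo (0:ℝ) 1) (hp : 1 ≤ p)
    (h1 : 0 < 2 + (α - 2) * p)
    (hT : 0 < T) :
    Tendsto (fun ε : ℝ => ∫ s in (0:ℝ)..T, (T - s) ^ ((α - 1) * p) *
        ∫ v in s..T, |(T - v + ε) ^ β - (T - v) ^ β| ^ p)
      (nhdsWithin 0 (Set.Ioi 0)) (nhds 0) := by
  obtain ⟨hβ₀, hβ₁⟩ := hβ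
  have hγ : 0 < (α - 1) * p + 1 := by linarith [show (α - 1) * p = (α - 2) * p + p by ring]
  set C := ∫ s in (0:ℝ)..T, (T - s) ^ ((α - 1) * p + 1)
  have hbound : ∀ ε ∈ Ioi (0:ℝ), ‖∫ s in (0:ℝ)..T, (T - s) ^ ((α - 1) * p) *
      ∫ v in s..T, |(T - v + ε) ^ β - (T - v) ^ β| ^ p‖ ≤ ε ^ (β * p) * C :=
    fun ε hε => norm_integral_rpow_mul_le hT.le hγ fun s hs =>
      norm_integral_abs_rpow_add_sub_rpow_pow_le hs.2 (le_of_lt hε) hβ₀.le hβ₁.le (by linarith)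
  have hlim : Tendsto (fun ε : ℝ => ε ^ (β * p) * C) (𝓝[>] 0) (𝓝 0) := by
    simpa using ((tendsto_id.mono_left nhdsWithin_le_nhds).rpow_const_nhds_zero
      (by positivity : 0 < β * p)).mul_const C
  exact squeeze_zero_norm' (eventually_mem_nhdsWithin.mono hbound) hlim

/-- Condition `(C_p)(i)` for the kernel `g(u) = u^β`, `β ∈ (0,1)`: if `p ≥ 1`,
`α ∈ (0,1)`, `2 + (α-2)p > 0`, `1 + (β-1)p > 0` and `T > 0`, then
`∫₀ᵀ (T-s)^{(α-1)p} (∫ₛᵀ |(T-v+ε)^β - (T-v)^β|^p dv) ds → 0` as `ε → 0⁺`. -/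
theorem stmt_15 (β p α T : ℝ) (hβ : β ∈ Set.Ioo (0:ℝ) 1) (hp : 1 ≤ p)
    (hα : α ∈ Set.Ioo (0:ℝ) 1) (h1 : 0 < 2 + (α - 2) * p) (h2 : 0 < 1 + (β - 1) * p)
    (hT : 0 < T) :
    Tendsto (fun ε : ℝ => ∫ s in (0:ℝ)..T, (T - s) ^ ((α - 1) * p) *
        ∫ v in s..T, |(T - v + ε) ^ β - (T - v) ^ β| ^ p)
      (nhdsWithin 0 (Set.Ioi 0)) (nhds 0) :=
  stmt_15_general β p α T hβ hp h1 hT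
end

section
/- Let α ∈ (0, 1/2) and s > 0. Then ∫₀^s ∫₀^s (s - max(u,v)) · (s-v)^{-(1+α)} (s-u)^{-(1+α)} du dv = 2 s^{1-2α} / ((1-α)(1-2α)). -/
/-!
Reflecting both variables `u ↦ s - u`, `v ↦ s - v` turns `s - max u v` into `min x y`, so
the integral becomes `∫₀ˢ ∫₀ˢ min x y · y^{-(1+α)} x^{-(1+α)} dx dy`. Splitting the inner
integral at `x = y` gives it in closed form; multiplied by `y^{-(1+α)}` it is a combination
of `y^{-2α}` and `y^{-α}`, both integrable at `0` since `α < 1/2`.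
-/

open MeasureTheory Real
open scoped Interval

namespace intervalIntegral

lemma integral_integral_comp_sub_left {E : Type*} [NormedAddCommGroup E] [NormedSpace ℝ E]
    (f : ℝ → ℝ → E) (s : ℝ) :
    (∫ v in (0:ℝ)..s, ∫ u in (0:ℝ)..s, f (s - u) (s - v))
      = ∫ y in (0:ℝ)..s, ∫ x in (0:ℝ)..s, f x y := by
  have inner : ∀ v, (∫ u in (0:ℝ)..s, f (s - u) (s - v)) = ∫ x in (0:ℝ)..s, f x (s - v) :=
    fun v => by simpa using integral_comp_sub_left (a := 0) (b := s) (f · (s - v)) s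
  simp only [inner]
  simpa using integral_comp_sub_left (a := 0) (b := s) (fun y => ∫ x in (0:ℝ)..s, f x y) s

end intervalIntegral

lemma Real.mul_rpow_neg_one_add {x : ℝ} (hx : 0 < x) (α : ℝ) :
    x * x ^ (-(1 + α)) = x ^ (-α) := by
  rw [show -α = 1 + -(1 + α) by ring, rpow_add hx, rpow_one]

section

variable {α : ℝ}

lemma integral_min_mul_rpow_neg_one_add (hα0 : 0 < α) (hα1 : α < 1) {y s : ℝ} (hy : 0 < y)
    (hys : y ≤ s) :
    (∫ x in (0:ℝ)..s, min x y * x ^ (-(1 + α)))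
      = y ^ (1 - α) / (1 - α) + y * (y ^ (-α) - s ^ (-α)) / α := by
  have below : ∀ x ∈ Ι 0 y, min x y * x ^ (-(1 + α)) = x ^ (-α) := fun x hx => by
    rw [Set.uIoc_of_le hy.le] at hx
    rw [min_eq_left hx.2, mul_rpow_neg_one_add hx.1]
  have above : Set.EqOn (fun x => min x y * x ^ (-(1 + α))) (fun x => y * x ^ (-(1 + α)))
      (Set.uIcc y s) := fun x hx => by
    rw [Set.uIcc_of_le hys] at hx
    simp only [min_eq_right hx.1]
  have zero_notMem : (0:ℝ) ∉ Set.uIcc y s := by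
    rw [Set.uIcc_of_le hys]
    exact fun h => h.1.not_gt hy
  have int_below : IntervalIntegrable (fun x => min x y * x ^ (-(1 + α))) volume 0 y :=
    (intervalIntegral.intervalIntegrable_rpow' (by linarith)).congr
      fun x hx => (below x hx).symm
  have int_above : IntervalIntegrable (fun x => min x y * x ^ (-(1 + α))) volume y s :=
    ((intervalIntegral.intervalIntegrable_rpow (Or.inr zero_notMem)).const_mul y).congr
      fun x hx => (above (Set.uIoc_subset_uIcc hx)).symm
  rw [← intervalIntegral.integral_add_adjacent_intervals int_below int_above,
    intervalIntegral.integral_congr_ae (Filter.Eventually.of_forall below),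
    intervalIntegral.integral_congr above, intervalIntegral.integral_const_mul,
    integral_rpow (Or.inl (by linarith)),
    integral_rpow (Or.inr ⟨by intro h; linarith, zero_notMem⟩),
    zero_rpow (by linarith), show -α + 1 = 1 - α by ring, show -(1 + α) + 1 = -α by ring]
  field_simp
  ring

lemma integral_min_mul_rpow_neg_one_add_mul_rpow (hα0 : 0 < α) (hα1 : α < 1) {y s : ℝ}
    (hy : 0 < y) (hys : y ≤ s) :
    (∫ x in (0:ℝ)..s, min x y * y ^ (-(1 + α)) * x ^ (-(1 + α)))
      = y ^ (-(2 * α)) / (α * (1 - α)) - s ^ (-α) / α * y ^ (-α) := by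
  have h1 : y ^ (-(1 + α)) * y ^ (1 - α) = y ^ (-(2 * α)) := by
    rw [← rpow_add hy]; ring_nf
  have h2 : y ^ (-(1 + α)) * y = y ^ (-α) := by
    rw [mul_comm, mul_rpow_neg_one_add hy]
  have h3 : y ^ (-α) * y ^ (-α) = y ^ (-(2 * α)) := by
    rw [← rpow_add hy]; ring_nf
  have coeff : 1 / (1 - α) + 1 / α = 1 / (α * (1 - α)) := by
    have : 1 - α ≠ 0 := by linarith
    field_simp
    ring
  have factor : ∀ x, min x y * y ^ (-(1 + α)) * x ^ (-(1 + α))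
      = y ^ (-(1 + α)) * (min x y * x ^ (-(1 + α))) := fun x => by ring
  simp only [factor, intervalIntegral.integral_const_mul]
  rw [integral_min_mul_rpow_neg_one_add hα0 hα1 hy hys]
  linear_combination h1 / (1 - α) + (y ^ (-α) - s ^ (-α)) / α * h2 + h3 / α
    + y ^ (-(2 * α)) * coeff

lemma integral_rpow_neg_two_mul_div_sub (hα0 : 0 < α) (hα2 : α < 1 / 2) {s : ℝ} (hs : 0 < s) :
    (∫ y in (0:ℝ)..s, y ^ (-(2 * α)) / (α * (1 - α)) - s ^ (-α) / α * y ^ (-α))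
      = 2 * s ^ (1 - 2 * α) / ((1 - α) * (1 - 2 * α)) := by
  rw [intervalIntegral.integral_sub
      ((intervalIntegral.intervalIntegrable_rpow' (by linarith)).div_const _)
      ((intervalIntegral.intervalIntegrable_rpow' (by linarith)).const_mul _),
    intervalIntegral.integral_div, intervalIntegral.integral_const_mul,
    integral_rpow (Or.inl (by linarith)), integral_rpow (Or.inl (by linarith)),
    zero_rpow (by linarith), zero_rpow (by linarith),
    show -(2 * α) + 1 = 1 - 2 * α by ring, show -α + 1 = 1 - α by ring]
  have e : s ^ (-α) * s ^ (1 - α) = s ^ (1 - 2 * α) := by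
    rw [← rpow_add hs]; ring_nf
  have : 1 - α ≠ 0 := by linarith
  have : 1 - 2 * α ≠ 0 := by linarith
  field_simp
  linear_combination -(1 - 2 * α) * e

end

/-- For `α ∈ (0,1/2)` and `s > 0`,
`∫₀ˢ ∫₀ˢ (s - max(u,v)) (s-v)^{-(1+α)} (s-u)^{-(1+α)} du dv
  = 2 s^{1-2α} / ((1-α)(1-2α))`. -/
theorem stmt_17 (α s : ℝ) (hα : α ∈ Set.Ioo (0:ℝ) (1/2)) (hs : 0 < s) :
    (∫ v in (0:ℝ)..s, ∫ u in (0:ℝ)..s,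
        (s - max u v) * (s - v) ^ (-(1 + α)) * (s - u) ^ (-(1 + α)))
      = 2 * s ^ (1 - 2 * α) / ((1 - α) * (1 - 2 * α)) := by
  obtain ⟨hα0, hα2⟩ := hα
  have reflect := intervalIntegral.integral_integral_comp_sub_left
    (fun x y => min x y * y ^ (-(1 + α)) * x ^ (-(1 + α))) s
  simp only [min_sub_sub_left] at reflect
  have outer : ∀ᵐ y, y ∈ Ι 0 s →
      (∫ x in (0:ℝ)..s, min x y * y ^ (-(1 + α)) * x ^ (-(1 + α)))
        = y ^ (-(2 * α)) / (α * (1 - α)) - s ^ (-α) / α * y ^ (-α) :=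
    Filter.Eventually.of_forall fun y hy => by
      rw [Set.uIoc_of_le hs.le] at hy
      exact integral_min_mul_rpow_neg_one_add_mul_rpow hα0 (by linarith) hy.1 hy.2
  rw [reflect, intervalIntegral.integral_congr_ae outer,
    integral_rpow_neg_two_mul_div_sub hα0 hα2 hs]
end
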